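/- arXiv:1103.3458 — 9 statements merged into one kernel-verified Lean document; each statement's English description precedes it below -/
import Mathlib

section
/- Let π be a flow on a locally compact metric space X and let N ∈ 𝓕. If T > 0 is such that Γ^T(N) = ∅, then A⁺(G^T(N)) = G^T(N), i.e. G^T(N) is positively invariant. -/
open Set Metric Filter Topology

/-- A (global) flow on a metric space: jointly continuous, identity at time `0`,
and `zρ(s+t) = (zρt)ρs` for all `s t : ℝ`. -/
def IsFlow {Z : Type*} [MetricSpace Z] (ρ : ℝ → Z → Z) : Prop :=
  Continuous (fun p : ℝ × Z => ρ p.1 p.2) ∧ (∀ z, ρ 0 z = z) ∧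
    ∀ (s t : ℝ) (z : Z), ρ (s + t) z = ρ s (ρ t z)

/-- `G^T_ρ(Y) = {z : zρt ∈ cl Y for all t ∈ [−T,T]}`. -/
def Gset {Z : Type*} [MetricSpace Z] (ρ : ℝ → Z → Z) (T : ℝ) (Y : Set Z) : Set Z :=
  {z | ∀ t ∈ Set.Icc (-T) T, ρ t z ∈ closure Y}

/-- `Γ^T_ρ(Y) = {z ∈ G^T_ρ(Y) : zρt ∈ ∂Y for some t ∈ [0,T]}`. -/
def GammaSet {Z : Type*} [MetricSpace Z] (ρ : ℝ → Z → Z) (T : ℝ) (Y : Set Z) : Set Z :=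
  {z ∈ Gset ρ T Y | ∃ t ∈ Set.Icc (0:ℝ) T, ρ t z ∈ frontier Y}

/-- `A⁺_ρ(Y) = {z ∈ Y : zρt ∈ Y for all t ≥ 0}`. -/
def Aplus {Z : Type*} [MetricSpace Z] (ρ : ℝ → Z → Z) (Y : Set Z) : Set Z :=
  {z ∈ Y | ∀ t : ℝ, 0 ≤ t → ρ t z ∈ Y}

/-- `A⁻_ρ(Y) = {z ∈ Y : zρ(−t) ∈ Y for all t ≥ 0}`. -/
def Aminus {Z : Type*} [MetricSpace Z] (ρ : ℝ → Z → Z) (Y : Set Z) : Set Z :=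
  {z ∈ Y | ∀ t : ℝ, 0 ≤ t → ρ (-t) z ∈ Y}

/-- `A_ρ(Y) = A⁺_ρ(Y) ∩ A⁻_ρ(Y)`. -/
def Ainv {Z : Type*} [MetricSpace Z] (ρ : ℝ → Z → Z) (Y : Set Z) : Set Z :=
  Aplus ρ Y ∩ Aminus ρ Y

/-- The family `𝓕` of sets `N` with nonempty interior such that `G^T(N) ⊆ int N`
for some `T > 0`. -/
def calF {Z : Type*} [MetricSpace Z] (ρ : ℝ → Z → Z) : Set (Set Z) :=
  {N | (interior N).Nonempty ∧ ∃ T > 0, Gset ρ T N ⊆ interior N}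

/-- The product flow of `π₀` on `ℝ × X`: `(s,x)πt = (s+t, xπ₀t)`. -/
def prodFlow {X : Type*} [MetricSpace X] (π₀ : ℝ → X → X) : ℝ → ℝ × X → ℝ × X :=
  fun t p => (p.1 + t, π₀ t p.2)

/-- A flow on `ℝ × X` is a skew product flow if `P₁((s,x)πt) = s + t`. -/
def IsSkewFlow {X : Type*} [MetricSpace X] (σ : ℝ → ℝ × X → ℝ × X) : Prop :=
  ∀ (t s : ℝ) (x : X), (σ t (s, x)).1 = s + t

/-- Semi-singular convergence of a sequence of flows on `ℝ × X` to a flow on `X`: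
for every sequence `(s_n)` in `ℝ` and all sequences `x_n → x₀`, `t_n → t₀ ∈ [0,∞)`,
`P₂((s_n,x_n) π_n t_n) → x₀ π₀ t₀`. -/
def SemiSingConv {X : Type*} [MetricSpace X]
    (πn : ℕ → ℝ → ℝ × X → ℝ × X) (π₀ : ℝ → X → X) : Prop :=
  ∀ (s : ℕ → ℝ) (x : ℕ → X) (x₀ : X) (t : ℕ → ℝ) (t₀ : ℝ),
    Filter.Tendsto x Filter.atTop (nhds x₀) → (∀ n, 0 ≤ t n) →
    Filter.Tendsto t Filter.atTop (nhds t₀) →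
    Filter.Tendsto (fun n => (πn n (t n) (s n, x n)).2) Filter.atTop (nhds (π₀ t₀ x₀))

/-- `B` is a stable isolating block for the flow `ρ`: a closed isolating neighborhood
which is positively invariant and such that each boundary point immediately leaves `B`
in backward time and immediately enters `int B` in forward time. -/
def IsStableIsolatingBlock {Z : Type*} [MetricSpace Z] (ρ : ℝ → Z → Z) (B : Set Z) : Prop :=
  IsClosed B ∧ Ainv ρ B ⊆ interior B ∧ Aplus ρ B = B ∧
    ∀ z ∈ frontier B, ∃ ε > 0, ∀ t ∈ Set.Ioo (0:ℝ) ε, ρ (-t) z ∉ B ∧ ρ t z ∈ interior B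

/-!
`G^T(N)` is closed. For `z ∈ G^T(N)` the point `zπT` lies in `cl N` but, as `Γ^T(N) = ∅`, not on
`∂N`; so `zπT ∈ int N`, the orbit of `z` stays in `cl N` a little beyond time `T`, and `zπδ ∈ G^T(N)`
for all small `δ ≥ 0`. A closed set that no orbit leaves immediately is positively invariant, by
real induction on the time.
-/

namespace IsFlow

variable {Z : Type*} [MetricSpace Z] {ρ : ℝ → Z → Z}

theorem continuous_orbit (hρ : IsFlow ρ) (z : Z) : Continuous fun t => ρ t z :=
  hρ.1.comp (continuous_id.prodMk continuous_const)

theorem continuous_apply (hρ : IsFlow ρ) (t : ℝ) : Continuous (ρ t) :=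
  hρ.1.comp (continuous_const.prodMk continuous_id)

theorem isClosed_Gset (hρ : IsFlow ρ) (T : ℝ) (Y : Set Z) : IsClosed (Gset ρ T Y) := by
  have : Gset ρ T Y = ⋂ t ∈ Icc (-T) T, ρ t ⁻¹' closure Y := by
    ext z
    simp [Gset]
  rw [this]
  exact isClosed_biInter fun t _ => isClosed_closure.preimage (hρ.continuous_apply t)

theorem aplus_eq_self_of_isClosed (hρ : IsFlow ρ) {S : Set Z} (hS : IsClosed S)
    (hstay : ∀ z ∈ S, ∃ ε > 0, ∀ δ ∈ Ico 0 ε, ρ δ z ∈ S) : Aplus ρ S = S := by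
  refine Subset.antisymm (fun z hz => hz.1) fun z hz => ⟨hz, fun t ht => ?_⟩
  have hclosed : IsClosed ({s | ρ s z ∈ S} ∩ Icc 0 t) :=
    (hS.preimage (hρ.continuous_orbit z)).inter isClosed_Icc
  have hzero : ρ 0 z ∈ S := by rwa [hρ.2.1]
  refine IsClosed.Icc_subset_of_forall_mem_nhdsWithin hclosed hzero (fun s hs => ?_) ⟨ht, le_rfl⟩
  obtain ⟨ε, hε, hδ⟩ := hstay _ hs.1
  filter_upwards [Ico_mem_nhdsGT (lt_add_of_pos_right s hε)] with u hu
  have := hδ (u - s) ⟨sub_nonneg.2 hu.1, by linarith [hu.2]⟩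
  rwa [← hρ.2.2, sub_add_cancel] at this

theorem exists_Ico_mem_Gset (hρ : IsFlow ρ) {T : ℝ} {Y : Set Z} {z : Z} (hz : z ∈ Gset ρ T Y)
    (hTz : ρ T z ∈ interior Y) : ∃ ε > 0, ∀ δ ∈ Ico 0 ε, ρ δ z ∈ Gset ρ T Y := by
  obtain ⟨ε, hε, hball⟩ :=
    Metric.isOpen_iff.mp (isOpen_interior.preimage (hρ.continuous_orbit z)) T hTz
  refine ⟨ε, hε, fun δ hδ t ht => ?_⟩
  rw [← hρ.2.2]
  rcases le_or_gt (t + δ) T with hle | hgt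
  · exact hz _ ⟨by linarith [ht.1, hδ.1], hle⟩
  · have : t + δ ∈ ball T ε := by
      rw [Real.ball_eq_Ioo]
      constructor <;> linarith [ht.2, hδ.2]
    exact interior_subset_closure (hball this)

end IsFlow

theorem mem_interior_of_gammaSet_eq_empty {Z : Type*} [MetricSpace Z] {ρ : ℝ → Z → Z}
    {T t : ℝ} {Y : Set Z} {z : Z} (hΓ : GammaSet ρ T Y = ∅) (hz : z ∈ Gset ρ T Y)
    (ht : t ∈ Icc 0 T) : ρ t z ∈ interior Y := by
  have hfront : ρ t z ∉ frontier Y := fun h => (hΓ ▸ ⟨hz, t, ht, h⟩ : z ∈ (∅ : Set Z))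
  have hcl : ρ t z ∈ closure Y := hz t ⟨by linarith [ht.1, ht.2], ht.2⟩
  by_contra hint
  exact hfront ⟨hcl, hint⟩

theorem stmt3_general {X : Type*} [MetricSpace X]
    (π : ℝ → X → X) (hπ : IsFlow π) (N : Set X)
    (T : ℝ) (hT : 0 < T) (hΓ : GammaSet π T N = ∅) :
    Aplus π (Gset π T N) = Gset π T N :=
  hπ.aplus_eq_self_of_isClosed (hπ.isClosed_Gset T N) fun _ hz =>
    hπ.exists_Ico_mem_Gset hz (mem_interior_of_gammaSet_eq_empty hΓ hz ⟨hT.le, le_rfl⟩)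

/-- If `N ∈ 𝓕` and `T > 0` is such that `Γ^T(N) = ∅`, then `G^T(N)` is positively
invariant: `A⁺(G^T(N)) = G^T(N)`. -/
theorem stmt3 {X : Type*} [MetricSpace X] [LocallyCompactSpace X]
    (π : ℝ → X → X) (hπ : IsFlow π) (N : Set X) (hN : N ∈ calF π)
    (T : ℝ) (hT : 0 < T) (hΓ : GammaSet π T N = ∅) :
    Aplus π (Gset π T N) = Gset π T N :=
  stmt3_general π hπ N T hT hΓ
end

section
/- Let π be a flow on a locally compact metric space X and let N ⊆ X be a compact isolating neighborhood such that A⁻(N) = A(N) = K ≠ ∅. Then there exists a closed set B with K ⊆ int B and B ⊆ int N such that A(B) = K, A⁺(B) = B, and for every x ∈ ∂B there is ε > 0 such that for all t ∈ (0,ε): xπ(−t) ∉ B and xπt ∈ int B. Such a B is called a stable isolating block. -/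
open Set Metric Filter Topology

/-!
`K = A(N)` is compact and invariant, and `A⁻(N) = K` says that a point of a closed neighbourhood
`C ⊆ int N` of `K` whose backward orbit stays in `C` lies in `K`. By compactness, long orbit
segments inside `C` therefore end close to `K`; hence `K` is Lyapunov stable and attracts a
neighbourhood of itself. Then
`V x = sup_{t ≥ 0} min (d (xπt) K) ε₀ · (1 + t) / (2 + t)`
is a Lyapunov function: the strictly increasing weight makes `V` strictly decrease along the
attracted orbits wherever `V > 0`, stability makes it upper semicontinuous near `K`, and a small
sublevel set `{V ≤ c}` is the block.
-/

open Set Metric Filter Topology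

theorem exists_first_time_ge {f : ℝ → ℝ} (hf : Continuous f) {a t : ℝ} (h0 : f 0 < a)
    (ht : 0 ≤ t) (hft : a ≤ f t) :
    ∃ τ ≥ 0, a ≤ f τ ∧ ∀ s ∈ Icc 0 τ, f s ≤ a := by
  set S := Ici 0 ∩ {s | a ≤ f s}
  have hbdd : BddBelow S := ⟨0, fun _ hs => hs.1⟩
  have hτ : sInf S ∈ S :=
    (isClosed_Ici.inter (isClosed_le continuous_const hf)).csInf_mem ⟨t, ht, hft⟩ hbdd
  have hbefore : Ico 0 (sInf S) ⊆ {s | f s ≤ a} := fun s hs =>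
    show f s ≤ a from not_lt.1 fun h => (csInf_le hbdd ⟨hs.1, h.le⟩).not_gt hs.2
  have hne : (0 : ℝ) ≠ sInf S := fun h => (h ▸ hτ.2).not_gt h0
  refine ⟨sInf S, hτ.1, hτ.2, ?_⟩
  rw [← closure_Ico hne]
  exact (isClosed_le hf continuous_const).closure_subset_iff.2 hbefore

section

variable {X : Type*} [MetricSpace X] {π : ℝ → X → X}

namespace IsFlow

theorem continuous_apply_s4 (hπ : IsFlow π) (t : ℝ) : Continuous (π t) :=
  hπ.1.comp (continuous_const.prodMk continuous_id)

theorem continuous_orbit_s4 (hπ : IsFlow π) (x : X) : Continuous fun t => π t x :=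
  hπ.1.comp (continuous_id.prodMk continuous_const)

theorem map_zero (hπ : IsFlow π) (x : X) : π 0 x = x := hπ.2.1 x

theorem map_add (hπ : IsFlow π) (s t : ℝ) (x : X) : π (s + t) x = π s (π t x) :=
  hπ.2.2 s t x

theorem map_map_neg (hπ : IsFlow π) (t : ℝ) (x : X) : π t (π (-t) x) = x := by
  rw [← hπ.map_add, add_neg_cancel, hπ.map_zero]

theorem eventually_forall_dist_lt (hπ : IsFlow π) (x : X) (T : ℝ) {θ : ℝ} (hθ : 0 < θ) :
    ∀ᶠ y in 𝓝 x, ∀ t ∈ Icc 0 T, dist (π t y) (π t x) < θ := by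
  refine isCompact_Icc.eventually_forall_of_forall_eventually fun t _ => ?_
  have hcont : Continuous fun z : X × ℝ => dist (π z.2 z.1) (π z.2 x) :=
    (hπ.1.comp continuous_swap).dist (hπ.1.comp (continuous_snd.prodMk continuous_const))
  exact hcont.continuousAt.eventually (gt_mem_nhds (by simpa using hθ))

theorem mem_Ainv_iff (hπ : IsFlow π) {N : Set X} {x : X} :
    x ∈ Ainv π N ↔ ∀ t, π t x ∈ N := by
  constructor
  · rintro ⟨⟨-, hfwd⟩, -, hbwd⟩ t
    rcases le_total 0 t with ht | ht
    · exact hfwd t ht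
    · simpa using hbwd (-t) (neg_nonneg.2 ht)
  · intro h
    have hx : x ∈ N := by simpa [hπ.map_zero] using h 0
    exact ⟨⟨hx, fun t _ => h t⟩, hx, fun t _ => h (-t)⟩

theorem isInvariant_Ainv (hπ : IsFlow π) (N : Set X) : IsInvariant π (Ainv π N) :=
  fun t x hx => hπ.mem_Ainv_iff.2 fun s => by
    rw [← hπ.map_add]; exact hπ.mem_Ainv_iff.1 hx _

theorem isClosed_Ainv (hπ : IsFlow π) {N : Set X} (hN : IsClosed N) : IsClosed (Ainv π N) := by
  have : Ainv π N = ⋂ t, π t ⁻¹' N := by ext x; simp [hπ.mem_Ainv_iff]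
  rw [this]
  exact isClosed_iInter fun t => hN.preimage (hπ.continuous_apply_s4 t)

end IsFlow

theorem Ainv_subset {N : Set X} : Ainv π N ⊆ N :=
  fun _ hx => hx.1.1

theorem Aminus_mono {B N : Set X} (h : B ⊆ N) : Aminus π B ⊆ Aminus π N :=
  fun _ ⟨hx, hbwd⟩ => ⟨h hx, fun t ht => h (hbwd t ht)⟩

theorem Ainv_mono {B N : Set X} (h : B ⊆ N) : Ainv π B ⊆ Ainv π N :=
  fun _ ⟨⟨hx, hfwd⟩, _, hbwd⟩ =>
    ⟨⟨h hx, fun t ht => h (hfwd t ht)⟩, h hx, fun t ht => h (hbwd t ht)⟩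

theorem IsCompact.exists_infDist_le_subset {K U : Set X}
    (hK : IsCompact K) (hKne : K.Nonempty) (hU : IsOpen U) (hKU : K ⊆ U) :
    ∃ ε > 0, ∀ x, infDist x K ≤ ε → x ∈ U := by
  obtain ⟨δ, hδ, hδU⟩ := hK.exists_thickening_subset_open hU hKU
  exact ⟨δ / 2, half_pos hδ, fun x hx =>
    hδU ((mem_thickening_iff_infDist_lt hKne).2 (by linarith))⟩

def IsLyapunovStable (π : ℝ → X → X) (K : Set X) : Prop :=
  ∀ ε > 0, ∃ δ > 0, ∀ x, infDist x K ≤ δ → ∀ t, 0 ≤ t → infDist (π t x) K < ε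

section Attraction

variable {K C : Set X}

theorem eventually_infDist_flow_lt (hπ : IsFlow π) (hC : IsCompact C) (hCK : Aminus π C ⊆ K)
    {ε : ℝ} (hε : 0 < ε) :
    ∀ᶠ u in atTop, ∀ w, (∀ t ∈ Icc 0 u, π t w ∈ C) → infDist (π u w) K < ε := by
  by_contra h
  simp only [not_eventually, not_forall, not_lt, frequently_atTop, exists_prop] at h
  choose u hun w hwC hfar using fun n : ℕ => h n
  have hu : Tendsto u atTop atTop := tendsto_atTop_mono hun tendsto_natCast_atTop_atTop
  have hu0 : ∀ n, 0 ≤ u n := fun n => (Nat.cast_nonneg n).trans (hun n)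
  obtain ⟨z, hzC, φ, hφ, hlim⟩ := hC.tendsto_subseq fun n => hwC n (u n) ⟨hu0 n, le_rfl⟩
  -- `z` is a limit of endpoints of ever longer orbit segments in `C`, so its backward orbit
  -- stays in `C`.
  have hzK : z ∈ K := by
    refine hCK ⟨hzC, fun s hs => hC.isClosed.mem_of_tendsto
      (((hπ.continuous_apply_s4 (-s)).tendsto z).comp hlim) ?_⟩
    filter_upwards [(hu.comp hφ.tendsto_atTop).eventually_ge_atTop s] with n hn
    simp only [Function.comp_apply] at hn ⊢
    rw [← hπ.map_add]
    exact hwC _ _ ⟨by linarith, by linarith⟩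
  have hzfar : ε ≤ infDist z K :=
    ge_of_tendsto (((continuous_infDist_pt K).tendsto z).comp hlim)
      (Eventually.of_forall fun n => hfar (φ n))
  rw [infDist_zero_of_mem hzK] at hzfar
  linarith

theorem tendsto_infDist_flow (hπ : IsFlow π) (hC : IsCompact C) (hCK : Aminus π C ⊆ K)
    {x : X} (hx : ∀ t, 0 ≤ t → π t x ∈ C) :
    Tendsto (fun t => infDist (π t x) K) atTop (𝓝 0) :=
  tendsto_order.2 ⟨fun _ ha => Eventually.of_forall fun _ => ha.trans_le infDist_nonneg,
    fun _ hε => (eventually_infDist_flow_lt hπ hC hCK hε).mono fun _ hu =>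
      hu x fun t ht => hx t ht.1⟩

theorem isLyapunovStable_of_isCompact (hπ : IsFlow π) (hK : IsCompact K) (hKne : K.Nonempty)
    (hKinv : IsForwardInvariant π K) (hC : IsCompact C) (hCK : Aminus π C ⊆ K) {ε₀ : ℝ}
    (hε₀ : 0 < ε₀)
    (hKC : ∀ x, infDist x K ≤ ε₀ → x ∈ C) : IsLyapunovStable π K := by
  intro ε hε
  set ε' := min ε ε₀
  obtain ⟨T, hT⟩ := eventually_atTop.1
    ((eventually_infDist_flow_lt hπ hC hCK (lt_min hε hε₀)).and (eventually_ge_atTop 0))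
  set U := {y | ∀ t ∈ Icc 0 T, infDist (π t y) K < ε'}
  have hKU : K ⊆ interior U := fun k hk => mem_interior_iff_mem_nhds.2 <|
    (hπ.eventually_forall_dist_lt k T (lt_min hε hε₀)).mono fun y hy t ht =>
      (infDist_le_dist_of_mem (hKinv ht.1 hk)).trans_lt (hy t ht)
  obtain ⟨δ, hδ, hδU⟩ := hK.exists_infDist_le_subset hKne isOpen_interior hKU
  refine ⟨δ, hδ, fun x hx t ht => ?_⟩
  have hxU : x ∈ U := interior_subset (hδU x hx)
  refine lt_of_not_ge fun hεt => ?_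
  -- the orbit stays in `C` up to its first exit from the `ε'`-neighbourhood, which happens
  -- after time `T`, too late to be compatible with the choice of `T`
  obtain ⟨τ, hτ, hετ, hbefore⟩ :=
    exists_first_time_ge ((continuous_infDist_pt K).comp (hπ.continuous_orbit_s4 x))
      (hxU 0 ⟨le_rfl, (hT T le_rfl).2⟩) ht ((min_le_left _ _).trans hεt)
  have hTτ : T ≤ τ := not_lt.1 fun h => (hxU τ ⟨hτ, h.le⟩).not_ge hετ
  exact ((hT τ hTτ).1 x fun s hs => hKC _ ((hbefore s hs).trans (min_le_right _ _))).not_ge hετ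

end Attraction

section Lyapunov

variable {K : Set X} {ε₀ : ℝ} {x : X}

noncomputable def lyapunovWeight (t : ℝ) : ℝ := (1 + t) / (2 + t)

theorem lyapunovWeight_pos {t : ℝ} (ht : 0 ≤ t) : 0 < lyapunovWeight t := by
  unfold lyapunovWeight; positivity

theorem lyapunovWeight_le_one {t : ℝ} (ht : 0 ≤ t) : lyapunovWeight t ≤ 1 := by
  unfold lyapunovWeight; rw [div_le_one (by linarith)]; linarith

theorem lyapunovWeight_zero : lyapunovWeight 0 = 1 / 2 := by norm_num [lyapunovWeight]

theorem strictMonoOn_lyapunovWeight : StrictMonoOn lyapunovWeight (Ici 0) := by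
  intro a ha b _ hab
  simp only [lyapunovWeight, mem_Ici] at ha ⊢
  rw [div_lt_div_iff₀ (by linarith) (by linarith)]
  linarith

theorem continuousOn_lyapunovWeight : ContinuousOn lyapunovWeight (Ici 0) :=
  ContinuousOn.div (by fun_prop) (by fun_prop) fun t ht => by simp only [mem_Ici] at ht; linarith

noncomputable def lyapunovTerm (π : ℝ → X → X) (K : Set X) (ε₀ : ℝ) (x : X) (t : ℝ) :
    ℝ :=
  min (infDist (π t x) K) ε₀ * lyapunovWeight t

noncomputable def lyapunov (π : ℝ → X → X) (K : Set X) (ε₀ : ℝ) (x : X) : ℝ :=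
  ⨆ t : Ici (0 : ℝ), lyapunovTerm π K ε₀ x t

theorem lyapunovTerm_nonneg (hε₀ : 0 ≤ ε₀) {t : ℝ} (ht : 0 ≤ t) :
    0 ≤ lyapunovTerm π K ε₀ x t :=
  mul_nonneg (le_min infDist_nonneg hε₀) (lyapunovWeight_pos ht).le

theorem lyapunovTerm_le (hε₀ : 0 ≤ ε₀) {t : ℝ} (ht : 0 ≤ t) :
    lyapunovTerm π K ε₀ x t ≤ min (infDist (π t x) K) ε₀ :=
  mul_le_of_le_one_right (le_min infDist_nonneg hε₀) (lyapunovWeight_le_one ht)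

theorem lyapunovTerm_le_add_dist {t : ℝ} (ht : 0 ≤ t) (x y : X) :
    lyapunovTerm π K ε₀ y t ≤ lyapunovTerm π K ε₀ x t + dist (π t y) (π t x) := by
  have hlip := ((lipschitz_infDist_pt K).min_const ε₀).dist_le_mul (π t y) (π t x)
  rw [Real.dist_eq, NNReal.coe_one, one_mul] at hlip
  replace hlip := mul_le_mul_of_nonneg_right ((le_abs_self _).trans hlip)
    (lyapunovWeight_pos ht).le
  have hw := mul_le_of_le_one_right (dist_nonneg (x := π t y) (y := π t x))
    (lyapunovWeight_le_one ht)
  unfold lyapunovTerm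
  linarith

theorem lyapunovTerm_map (hπ : IsFlow π) (s t : ℝ) :
    lyapunovTerm π K ε₀ (π s x) t =
      min (infDist (π (t + s) x) K) ε₀ * lyapunovWeight t := by
  rw [lyapunovTerm, hπ.map_add]

theorem bddAbove_range_lyapunovTerm (hε₀ : 0 ≤ ε₀) (x : X) :
    BddAbove (range fun t : Ici (0 : ℝ) => lyapunovTerm π K ε₀ x t) :=
  ⟨ε₀, by rintro _ ⟨t, rfl⟩; exact (lyapunovTerm_le hε₀ t.2).trans (min_le_right _ _)⟩

theorem lyapunovTerm_le_lyapunov (hε₀ : 0 ≤ ε₀) {t : ℝ} (ht : 0 ≤ t) :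
    lyapunovTerm π K ε₀ x t ≤ lyapunov π K ε₀ x :=
  le_ciSup (bddAbove_range_lyapunovTerm hε₀ x) ⟨t, ht⟩

theorem lyapunov_le {b : ℝ} (h : ∀ t, 0 ≤ t → lyapunovTerm π K ε₀ x t ≤ b) :
    lyapunov π K ε₀ x ≤ b :=
  ciSup_le fun t => h t t.2

theorem lyapunov_nonneg (hε₀ : 0 ≤ ε₀) : 0 ≤ lyapunov π K ε₀ x :=
  (lyapunovTerm_nonneg hε₀ le_rfl).trans (lyapunovTerm_le_lyapunov hε₀ le_rfl)

theorem lyapunov_eq_zero (hε₀ : 0 ≤ ε₀) (hx : ∀ t, 0 ≤ t → π t x ∈ K) :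
    lyapunov π K ε₀ x = 0 :=
  (lyapunov_le fun t ht => by
    rw [lyapunovTerm, infDist_zero_of_mem (hx t ht), min_eq_left hε₀, zero_mul]).antisymm
    (lyapunov_nonneg hε₀)

theorem min_infDist_le_two_mul_lyapunov (hπ : IsFlow π) (hε₀ : 0 ≤ ε₀) :
    min (infDist x K) ε₀ ≤ 2 * lyapunov π K ε₀ x := by
  have := lyapunovTerm_le_lyapunov (π := π) (K := K) (x := x) hε₀ le_rfl
  rw [lyapunovTerm, lyapunovWeight_zero, hπ.map_zero] at this
  linarith

theorem lyapunov_map_le (hπ : IsFlow π) (hε₀ : 0 ≤ ε₀) {s : ℝ} (hs : 0 ≤ s) :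
    lyapunov π K ε₀ (π s x) ≤ lyapunov π K ε₀ x := lyapunov_le fun t ht =>
  calc lyapunovTerm π K ε₀ (π s x) t
      = min (infDist (π (t + s) x) K) ε₀ * lyapunovWeight t := lyapunovTerm_map hπ s t
    _ ≤ lyapunovTerm π K ε₀ x (t + s) :=
      mul_le_mul_of_nonneg_left
        (strictMonoOn_lyapunovWeight.monotoneOn ht (by simp only [mem_Ici]; linarith)
          (by linarith))
        (le_min infDist_nonneg hε₀)
    _ ≤ lyapunov π K ε₀ x := lyapunovTerm_le_lyapunov hε₀ (by linarith)

theorem exists_lyapunov_eq_lyapunovTerm (hπ : IsFlow π) (hε₀ : 0 ≤ ε₀)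
    (hx : Tendsto (fun t => infDist (π t x) K) atTop (𝓝 0)) (hV : 0 < lyapunov π K ε₀ x) :
    ∃ t ≥ 0, lyapunov π K ε₀ x = lyapunovTerm π K ε₀ x t := by
  obtain ⟨R, hR⟩ := eventually_atTop.1
    ((hx.eventually (gt_mem_nhds (half_pos hV))).and (eventually_ge_atTop 0))
  have hcont : ContinuousOn (lyapunovTerm π K ε₀ x) (Icc 0 R) :=
    ((((continuous_infDist_pt K).comp (hπ.continuous_orbit_s4 x)).min
      continuous_const).continuousOn.mul continuousOn_lyapunovWeight).mono Icc_subset_Ici_self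
  obtain ⟨t₀, ht₀, hmax⟩ :=
    isCompact_Icc.exists_isMaxOn (nonempty_Icc.2 (hR R le_rfl).2) hcont
  -- beyond time `R` the terms are below `V x / 2`, so the supremum is attained on `[0, R]`
  have hbound :
      lyapunov π K ε₀ x ≤ max (lyapunovTerm π K ε₀ x t₀) (lyapunov π K ε₀ x / 2) :=
    lyapunov_le fun t ht => by
      rcases le_or_gt t R with htR | hRt
      · exact le_max_of_le_left (hmax ⟨ht, htR⟩)
      · exact le_max_of_le_right ((lyapunovTerm_le hε₀ ht).trans
          ((min_le_left _ _).trans (hR t hRt.le).1.le))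
  refine ⟨t₀, ht₀.1, le_antisymm ?_ (lyapunovTerm_le_lyapunov hε₀ ht₀.1)⟩
  exact (le_max_iff.1 hbound).resolve_right fun h => by linarith

theorem lyapunov_map_lt (hπ : IsFlow π) (hε₀ : 0 ≤ ε₀)
    (hx : Tendsto (fun t => infDist (π t x) K) atTop (𝓝 0)) {s : ℝ} (hs : 0 < s)
    (hV : 0 < lyapunov π K ε₀ x) : lyapunov π K ε₀ (π s x) < lyapunov π K ε₀ x := by
  rcases le_or_gt (lyapunov π K ε₀ (π s x)) 0 with h | hpos
  · linarith
  have hy : Tendsto (fun t => infDist (π t (π s x)) K) atTop (𝓝 0) :=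
    (hx.comp (tendsto_atTop_add_const_right _ s tendsto_id)).congr fun t => by
      simp only [Function.comp_apply, id, hπ.map_add]
  obtain ⟨t, ht, hVt⟩ := exists_lyapunov_eq_lyapunovTerm hπ hε₀ hy hpos
  rw [hVt, lyapunovTerm_map hπ] at hpos ⊢
  have hm : 0 < min (infDist (π (t + s) x) K) ε₀ :=
    pos_of_mul_pos_left hpos (lyapunovWeight_pos ht).le
  calc min (infDist (π (t + s) x) K) ε₀ * lyapunovWeight t
      < lyapunovTerm π K ε₀ x (t + s) :=
        mul_lt_mul_of_pos_left (strictMonoOn_lyapunovWeight ht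
          (by simp only [mem_Ici]; linarith) (by linarith)) hm
    _ ≤ lyapunov π K ε₀ x := lyapunovTerm_le_lyapunov hε₀ (by linarith)

theorem isClosed_setOf_lyapunov_le (hπ : IsFlow π) (hε₀ : 0 ≤ ε₀) (c : ℝ) :
    IsClosed {x | lyapunov π K ε₀ x ≤ c} :=
  (lowerSemicontinuous_ciSup (bddAbove_range_lyapunovTerm hε₀) fun t =>
    ((((continuous_infDist_pt K).comp (hπ.continuous_apply_s4 t)).min continuous_const).mul
      continuous_const).lowerSemicontinuous).isClosed_preimage c

theorem upperSemicontinuousAt_lyapunov (hπ : IsFlow π) (hε₀ : 0 ≤ ε₀)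
    (hK : IsLyapunovStable π K) (hx : Tendsto (fun t => infDist (π t x) K) atTop (𝓝 0)) :
    UpperSemicontinuousAt (lyapunov π K ε₀) x := by
  intro b hb
  obtain ⟨η, hη, hηb⟩ : ∃ η > 0, lyapunov π K ε₀ x + η < b :=
    ⟨(b - lyapunov π K ε₀ x) / 2, by linarith, by linarith⟩
  obtain ⟨δ, hδ, hδK⟩ := hK η hη
  obtain ⟨T, hT⟩ := eventually_atTop.1
    ((hx.eventually (gt_mem_nhds (half_pos hδ))).and (eventually_ge_atTop 0))
  filter_upwards [hπ.eventually_forall_dist_lt x T (lt_min hη (half_pos hδ))] with y hy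
  refine (lyapunov_le fun t ht => ?_).trans_lt hηb
  rcases le_or_gt t T with htT | hTt
  · have hdist := (hy t ⟨ht, htT⟩).trans_le (min_le_left _ _)
    linarith [lyapunovTerm_le_add_dist (π := π) (K := K) (ε₀ := ε₀) ht x y,
      lyapunovTerm_le_lyapunov (π := π) (K := K) (x := x) hε₀ ht]
  · -- at time `T` the orbit of `y` is `δ`-close to `K`, so it stays `η`-close afterwards
    have hyT : infDist (π T y) K ≤ δ := by
      have := (hy T ⟨(hT T le_rfl).2, le_rfl⟩).trans_le (min_le_right _ _)
      linarith [infDist_le_infDist_add_dist (x := π T y) (y := π T x) (s := K), (hT T le_rfl).1]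
    have hlate := hδK _ hyT (t - T) (by linarith)
    rw [← hπ.map_add, sub_add_cancel] at hlate
    linarith [lyapunovTerm_le (π := π) (K := K) (x := y) hε₀ ht,
      min_le_left (infDist (π t y) K) ε₀, lyapunov_nonneg (π := π) (K := K) (x := x) hε₀]

theorem mem_interior_setOf_lyapunov_le (hπ : IsFlow π) (hε₀ : 0 ≤ ε₀)
    (hK : IsLyapunovStable π K) (hx : Tendsto (fun t => infDist (π t x) K) atTop (𝓝 0))
    {c : ℝ} (hV : lyapunov π K ε₀ x < c) : x ∈ interior {y | lyapunov π K ε₀ y ≤ c} :=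
  mem_interior_iff_mem_nhds.2 ((upperSemicontinuousAt_lyapunov hπ hε₀ hK hx c hV).mono
    fun _ h => le_of_lt h)

theorem infDist_le_of_lyapunov_le (hπ : IsFlow π) (hε₀ : 0 ≤ ε₀) {c : ℝ}
    (hc : 2 * c < ε₀) (hx : lyapunov π K ε₀ x ≤ c) : infDist x K ≤ 2 * c := by
  have := min_infDist_le_two_mul_lyapunov (K := K) (x := x) hπ hε₀
  by_contra! h
  have := lt_min h hc
  linarith

end Lyapunov

theorem exists_stable_block {K : Set X} {ε₀ δ : ℝ}
    (hπ : IsFlow π) (hKinv : IsForwardInvariant π K) (hK : IsLyapunovStable π K)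
    (hε₀ : 0 < ε₀) (hδ : 0 < δ)
    (hattr : ∀ x, infDist x K ≤ δ → Tendsto (fun t => infDist (π t x) K) atTop (𝓝 0)) :
    ∃ B : Set X, IsClosed B ∧ K ⊆ interior B ∧ (∀ x ∈ B, infDist x K ≤ ε₀) ∧
      Aplus π B = B ∧
      ∀ x ∈ frontier B, ∀ t > 0, π (-t) x ∉ B ∧ π t x ∈ interior B := by
  obtain ⟨c, hc, hcδ, hcε₀⟩ : ∃ c > 0, 2 * c ≤ δ ∧ 2 * c < ε₀ :=
    ⟨min δ ε₀ / 4, by positivity, by linarith [min_le_left δ ε₀, lt_min hδ hε₀],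
      by linarith [min_le_right δ ε₀, lt_min hδ hε₀]⟩
  set B := {x | lyapunov π K ε₀ x ≤ c}
  have hBK : ∀ x ∈ B, infDist x K ≤ 2 * c := fun x hx =>
    infDist_le_of_lyapunov_le hπ hε₀.le hcε₀ hx
  have hBattr : ∀ x ∈ B, Tendsto (fun t => infDist (π t x) K) atTop (𝓝 0) := fun x hx =>
    hattr x ((hBK x hx).trans hcδ)
  have hinterior : ∀ x ∈ B, lyapunov π K ε₀ x < c → x ∈ interior B := fun x hx =>
    mem_interior_setOf_lyapunov_le hπ hε₀.le hK (hBattr x hx)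
  have hVK : ∀ x ∈ K, lyapunov π K ε₀ x = 0 := fun x hx =>
    lyapunov_eq_zero hε₀.le fun t ht => hKinv ht hx
  have hBcl : IsClosed B := isClosed_setOf_lyapunov_le hπ hε₀.le c
  refine ⟨B, hBcl, fun x hx => hinterior x ((hVK x hx).trans_le hc.le) ((hVK x hx).trans_lt hc),
    fun x hx => (hBK x hx).trans hcε₀.le,
    (sep_subset _ _).antisymm fun x hx =>
      ⟨hx, fun t ht => (lyapunov_map_le hπ hε₀.le ht).trans hx⟩,
    fun x hx t ht => ?_⟩
  have hxB : x ∈ B := hBcl.frontier_subset hx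
  have hVx : lyapunov π K ε₀ x = c :=
    le_antisymm hxB (not_lt.1 fun h => hx.2 (hinterior x hxB h))
  refine ⟨fun hy => ?_, hinterior _ ?_ ?_⟩
  · have hle : lyapunov π K ε₀ x ≤ lyapunov π K ε₀ (π (-t) x) := by
      simpa only [hπ.map_map_neg] using lyapunov_map_le (x := π (-t) x) hπ hε₀.le ht.le
    have hlt := lyapunov_map_lt hπ hε₀.le (hBattr _ hy) ht (by linarith)
    rw [hπ.map_map_neg] at hlt
    exact (hlt.trans_le hy).ne hVx
  · exact (lyapunov_map_le hπ hε₀.le ht.le).trans hxB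
  · exact (lyapunov_map_lt hπ hε₀.le (hBattr x hxB) ht (by linarith)).trans_eq hVx

end

theorem stmt4_general {X : Type*} [MetricSpace X]
    (π : ℝ → X → X) (hπ : IsFlow π) (N : Set X) (hNcpt : IsCompact N)
    (hNiso : Ainv π N ⊆ interior N)
    (heq : Aminus π N = Ainv π N) (hne : (Ainv π N).Nonempty) :
    ∃ B : Set X, IsClosed B ∧ Ainv π N ⊆ interior B ∧ B ⊆ interior N ∧
      Ainv π B = Ainv π N ∧ Aplus π B = B ∧
      ∀ x ∈ frontier B, ∃ ε > 0, ∀ t ∈ Set.Ioo (0:ℝ) ε,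
        π (-t) x ∉ B ∧ π t x ∈ interior B := by
  set K := Ainv π N
  have hKinv : IsInvariant π K := hπ.isInvariant_Ainv N
  have hKcpt : IsCompact K :=
    hNcpt.of_isClosed_subset (hπ.isClosed_Ainv hNcpt.isClosed) Ainv_subset
  obtain ⟨ε₀, hε₀, hε₀N⟩ := hKcpt.exists_infDist_le_subset hne isOpen_interior hNiso
  set C := {x | infDist x K ≤ ε₀}
  have hCN : C ⊆ N := fun x hx => interior_subset (hε₀N x hx)
  have hCcpt : IsCompact C :=
    hNcpt.of_isClosed_subset (isClosed_le (continuous_infDist_pt K) continuous_const) hCN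
  have hCK : Aminus π C ⊆ K := heq ▸ Aminus_mono hCN
  have hK : IsLyapunovStable π K := isLyapunovStable_of_isCompact hπ hKcpt hne
    hKinv.isForwardInvariant hCcpt hCK hε₀ fun _ hx => hx
  obtain ⟨δ, hδ, hδK⟩ := hK ε₀ hε₀
  obtain ⟨B, hBcl, hKB, hBK, hBplus, hBfr⟩ := exists_stable_block hπ hKinv.isForwardInvariant
    hK hε₀ hδ fun x hx => tendsto_infDist_flow hπ hCcpt hCK fun t ht => (hδK x hx t ht).le
  have hBN : B ⊆ interior N := fun x hx => hε₀N x (hBK x hx)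
  refine ⟨B, hBcl, hKB, hBN, ?_, hBplus,
    fun x hx => ⟨1, one_pos, fun t ht => hBfr x hx t ht.1⟩⟩
  exact (Ainv_mono (hBN.trans interior_subset)).antisymm fun x hx =>
    hπ.mem_Ainv_iff.2 fun t => interior_subset (hKB (hKinv t hx))

/-- Existence of stable isolating blocks: if `N` is a compact isolating neighborhood with
`A⁻(N) = A(N) = K ≠ ∅`, then there is a stable isolating block `B ⊆ int N` for `K`. -/
theorem stmt4 {X : Type*} [MetricSpace X] [LocallyCompactSpace X]
    (π : ℝ → X → X) (hπ : IsFlow π) (N : Set X) (hNcpt : IsCompact N)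
    (hNiso : Ainv π N ⊆ interior N)
    (heq : Aminus π N = Ainv π N) (hne : (Ainv π N).Nonempty) :
    ∃ B : Set X, IsClosed B ∧ Ainv π N ⊆ interior B ∧ B ⊆ interior N ∧
      Ainv π B = Ainv π N ∧ Aplus π B = B ∧
      ∀ x ∈ frontier B, ∃ ε > 0, ∀ t ∈ Set.Ioo (0:ℝ) ε,
        π (-t) x ∉ B ∧ π t x ∈ interior B :=
  stmt4_general π hπ N hNcpt hNiso heq hne
end

section
/- Let π₀ be a flow on a locally compact metric space X, B a compact stable isolating block for π₀ with A_{π₀}(B) ≠ ∅, and N = ℝ × B. Let (π_n) be a sequence of flows on ℝ × X converging semi-singularly to π₀. Then for every T > 0 there is n₀ such that G^T_{π_n}(N) ≠ ∅ for all n ≥ n₀. -/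
open Set Metric Filter Topology

/-!
A point `x₀ ∈ A_{π₀}(B)` has its whole `π₀`-orbit in `A_{π₀}(B) ⊆ int B`, in particular the
compact orbit segment over `[0, 2T]`. Semi-singular convergence is uniform on compact time
intervals (a bad time sequence would have a convergent subsequence), so for large `n` the
`π_n`-trajectory of `(0, x₀)` stays in `ℝ × B` over `[0, 2T]`, and its point at time `T`
lies in `G^T_{π_n}(ℝ × B)`.
-/

theorem flow_mem_Ainv {Z : Type*} [MetricSpace Z] {ρ : ℝ → Z → Z} (hρ : IsFlow ρ)
    {Y : Set Z} {z : Z} (hz : z ∈ Ainv ρ Y) (r : ℝ) : ρ r z ∈ Ainv ρ Y := by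
  have horbit : ∀ t, ρ t z ∈ Y := fun t => by
    rcases le_or_gt 0 t with ht | ht
    · exact hz.1.2 t ht
    · simpa using hz.2.2 (-t) (by linarith)
  exact ⟨⟨horbit r, fun t _ => hρ.2.2 t r z ▸ horbit _⟩,
    ⟨horbit r, fun t _ => hρ.2.2 (-t) r z ▸ horbit _⟩⟩

theorem flow_mem_Gset_of_forall_mem_Icc {Z : Type*} [MetricSpace Z] {ρ : ℝ → Z → Z}
    (hρ : IsFlow ρ) {Y : Set Z} {z : Z} {T : ℝ}
    (hz : ∀ t ∈ Icc 0 (2 * T), ρ t z ∈ Y) : ρ T z ∈ Gset ρ T Y := by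
  intro t ht
  rw [← hρ.2.2]
  exact subset_closure (hz _ ⟨by linarith [ht.1], by linarith [ht.2]⟩)

theorem StrictMono.exists_extend_mem_tendsto {α : Type*} [TopologicalSpace α] {σ : ℕ → ℕ}
    (hσ : StrictMono σ) {S : Set α} {g : ℕ → α} {a : α} (hgS : ∀ k, g k ∈ S) (haS : a ∈ S)
    (hg : Tendsto g atTop (𝓝 a)) :
    ∃ t : ℕ → α, (∀ n, t n ∈ S) ∧ (∀ k, t (σ k) = g k) ∧ Tendsto t atTop (𝓝 a) := by
  refine ⟨Function.extend σ g fun _ => a, fun n => ?_, hσ.injective.extend_apply g _, ?_⟩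
  · by_cases hrange : ∃ k, σ k = n
    · obtain ⟨k, rfl⟩ := hrange
      rw [hσ.injective.extend_apply]
      exact hgS k
    · rw [Function.extend_apply' _ _ _ hrange]
      exact haS
  refine (atTop_basis.tendsto_iff (𝓝 a).basis_sets).2 fun U hU => ?_
  obtain ⟨K, hK⟩ := eventually_atTop.1 (hg hU)
  refine ⟨σ K, trivial, fun n hn => ?_⟩
  by_cases hrange : ∃ k, σ k = n
  · obtain ⟨k, rfl⟩ := hrange
    rw [hσ.injective.extend_apply]
    exact hK k (hσ.le_iff_le.1 hn)
  · rw [Function.extend_apply' _ _ _ hrange]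
    exact mem_of_mem_nhds hU

theorem SemiSingConv.eventually_forall_mem {X : Type*} [MetricSpace X]
    {πn : ℕ → ℝ → ℝ × X → ℝ × X} {π₀ : ℝ → X → X} (hss : SemiSingConv πn π₀)
    {K : Set ℝ} (hK : IsCompact K) (hK₀ : K ⊆ Ici 0) {U : Set X} (hU : IsOpen U)
    (s : ℕ → ℝ) {x : ℕ → X} {x₀ : X} (hx : Tendsto x atTop (𝓝 x₀))
    (hKU : ∀ t ∈ K, π₀ t x₀ ∈ U) :
    ∀ᶠ n in atTop, ∀ t ∈ K, (πn n t (s n, x n)).2 ∈ U := by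
  by_contra hbad
  obtain ⟨φ, hφ, hbadφ⟩ := extraction_of_frequently_atTop (not_eventually.1 hbad)
  choose τ hτK hτU using fun k => not_forall₂.1 (hbadφ k)
  obtain ⟨t₀, ht₀K, ψ, hψ, hτψ⟩ := hK.tendsto_subseq hτK
  have hσ : StrictMono (φ ∘ ψ) := hφ.comp hψ
  -- `SemiSingConv` only speaks about full sequences, so the bad times are padded with `t₀`.
  obtain ⟨t, htK, htσ, ht⟩ := hσ.exists_extend_mem_tendsto (fun k => hτK (ψ k)) ht₀K hτψ
  have hlim := hss s x x₀ t t₀ hx (fun n => hK₀ (htK n)) ht (hU.mem_nhds (hKU t₀ ht₀K))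
  obtain ⟨k, hk⟩ := (hσ.tendsto_atTop.eventually hlim).exists
  exact hτU (ψ k) (htσ k ▸ hk)

theorem stmt6_general {X : Type*} [MetricSpace X]
    (π₀ : ℝ → X → X) (hπ₀ : IsFlow π₀) (B : Set X)
    (hB : IsStableIsolatingBlock π₀ B) (hne : (Ainv π₀ B).Nonempty)
    (πn : ℕ → ℝ → ℝ × X → ℝ × X) (hflow : ∀ n, IsFlow (πn n))
    (hss : SemiSingConv πn π₀) :
    ∀ T > (0:ℝ), ∃ n₀ : ℕ, ∀ n ≥ n₀,
      (Gset (πn n) T ((Set.univ : Set ℝ) ×ˢ B)).Nonempty := by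
  intro T _
  obtain ⟨x₀, hx₀⟩ := hne
  have horbit : ∀ t ∈ Icc 0 (2 * T), π₀ t x₀ ∈ interior B :=
    fun t _ => hB.2.1 (flow_mem_Ainv hπ₀ hx₀ t)
  obtain ⟨n₀, hn₀⟩ := eventually_atTop.1 <| hss.eventually_forall_mem isCompact_Icc
    (fun _ ht => ht.1) isOpen_interior (fun _ => 0) tendsto_const_nhds horbit
  exact ⟨n₀, fun n hn => ⟨πn n T (0, x₀), flow_mem_Gset_of_forall_mem_Icc (hflow n)
    fun t ht => ⟨trivial, interior_subset (hn₀ n hn t ht)⟩⟩⟩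

/-- If `B` is a compact stable isolating block for `π₀` with `A_{π₀}(B) ≠ ∅` and
`π_n → π₀` semi-singularly, then for every `T > 0` the sets `G^T_{π_n}(ℝ × B)` are
eventually nonempty. -/
theorem stmt6 {X : Type*} [MetricSpace X] [LocallyCompactSpace X]
    (π₀ : ℝ → X → X) (hπ₀ : IsFlow π₀) (B : Set X) (hBcpt : IsCompact B)
    (hB : IsStableIsolatingBlock π₀ B) (hne : (Ainv π₀ B).Nonempty)
    (πn : ℕ → ℝ → ℝ × X → ℝ × X) (hflow : ∀ n, IsFlow (πn n))
    (hss : SemiSingConv πn π₀) :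
    ∀ T > (0:ℝ), ∃ n₀ : ℕ, ∀ n ≥ n₀,
      (Gset (πn n) T ((Set.univ : Set ℝ) ×ˢ B)).Nonempty :=
  stmt6_general π₀ hπ₀ B hB hne πn hflow hss
end

section
/- Let π₀ be a flow on a locally compact metric space X, B a compact stable isolating block for π₀, and N = ℝ × B. Let (π_n) be a sequence of flows on ℝ × X converging semi-singularly to π₀. Then there exist T₀ > 0 and n₀ ∈ ℕ such that for all T ≥ T₀ and all n ≥ n₀, Γ^T_{π_n}(N) = ∅. -/
/-! Suppose `Γ^{T_k}_{π_{n_k}}(ℝ × B) ≠ ∅` with `T_k, n_k → ∞`. Flowing the witnesses to the time at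
which they hit the boundary gives points `w_k` with `P₂ w_k ∈ ∂B` whose backward orbits stay in
`ℝ × B` for time `T_k`. Pass to a limit `x₀ ∈ ∂B` and fix `t > 0` below the `ε` of the block
condition at `x₀`. The points `P₂(w_k π_{n_k}(-t)) ∈ B` accumulate at some `y₀ ∈ B`, and
semi-singular convergence forces `y₀π₀t = x₀`. Hence `x₀π₀(-t) = y₀ ∈ B`, although `x₀` leaves `B`
immediately in backward time. -/

open Set Metric Filter Topology

open Function

theorem StrictMono.exists_leftInverse_tendsto_atTop {φ : ℕ → ℕ} (hφ : StrictMono φ) :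
    ∃ ψ : ℕ → ℕ, LeftInverse ψ φ ∧ Tendsto ψ atTop atTop := by
  refine ⟨fun m => Nat.findGreatest (fun k => φ k ≤ m) m, fun k => ?_, ?_⟩
  · refine le_antisymm ?_ (Nat.le_findGreatest hφ.le_apply le_rfl)
    exact hφ.le_iff_le.mp (Nat.findGreatest_spec (P := fun j => φ j ≤ φ k) hφ.le_apply le_rfl)
  · refine tendsto_atTop_atTop.mpr fun k => ⟨φ k, fun m hm => ?_⟩
    exact Nat.le_findGreatest (hφ.le_apply.trans hm) hm

namespace IsFlow

variable {Z : Type*} [MetricSpace Z] {ρ : ℝ → Z → Z}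

theorem apply_apply_neg (hρ : IsFlow ρ) (t : ℝ) (z : Z) : ρ t (ρ (-t) z) = z := by
  rw [← hρ.2.2, add_neg_cancel, hρ.2.1]

theorem apply_neg_apply (hρ : IsFlow ρ) (t : ℝ) (z : Z) : ρ (-t) (ρ t z) = z := by
  simpa using hρ.apply_apply_neg (-t) z

end IsFlow

theorem exists_frontier_backward_mem_closure_of_mem_GammaSet {Z : Type*} [MetricSpace Z]
    {ρ : ℝ → Z → Z} (hρ : IsFlow ρ) {T : ℝ} {Y : Set Z} {z : Z} (hz : z ∈ GammaSet ρ T Y) :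
    ∃ w ∈ frontier Y, ∀ t ∈ Icc 0 T, ρ (-t) w ∈ closure Y := by
  obtain ⟨hzG, τ, hτ, hτY⟩ := hz
  refine ⟨ρ τ z, hτY, fun t ht => ?_⟩
  rw [← hρ.2.2]
  exact hzG _ ⟨by linarith [ht.2, hτ.1], by linarith [ht.1, hτ.2]⟩

theorem exists_frontier_backward_mem_of_mem_GammaSet_univ_prod {X : Type*} [MetricSpace X]
    {ρ : ℝ → ℝ × X → ℝ × X} (hρ : IsFlow ρ) {T : ℝ} {B : Set X} (hB : IsClosed B)
    {z : ℝ × X} (hz : z ∈ GammaSet ρ T (univ ×ˢ B)) :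
    ∃ w : ℝ × X, w.2 ∈ frontier B ∧ ∀ t ∈ Icc 0 T, (ρ (-t) w).2 ∈ B := by
  obtain ⟨w, hw, hback⟩ := exists_frontier_backward_mem_closure_of_mem_GammaSet hρ hz
  rw [frontier_univ_prod_eq] at hw
  refine ⟨w, hw.2, fun t ht => ?_⟩
  simpa [closure_prod_eq, hB.closure_eq] using hback t ht

namespace SemiSingConv

variable {X : Type*} [MetricSpace X] {πn : ℕ → ℝ → ℝ × X → ℝ × X} {π₀ : ℝ → X → X}

theorem tendsto_comp_of_strictMono (hss : SemiSingConv πn π₀) {φ : ℕ → ℕ} (hφ : StrictMono φ)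
    (s : ℕ → ℝ) {x : ℕ → X} {x₀ : X} (hx : Tendsto x atTop (𝓝 x₀)) {t : ℕ → ℝ} {t₀ : ℝ}
    (ht : ∀ k, 0 ≤ t k) (htt : Tendsto t atTop (𝓝 t₀)) :
    Tendsto (fun k => (πn (φ k) (t k) (s k, x k)).2) atTop (𝓝 (π₀ t₀ x₀)) := by
  -- `SemiSingConv` speaks of sequences indexed by the flow index: pull the data back along `ψ`.
  obtain ⟨ψ, hψφ, hψ⟩ := hφ.exists_leftInverse_tendsto_atTop
  have := (hss (s ∘ ψ) (x ∘ ψ) x₀ (t ∘ ψ) t₀ (hx.comp hψ) (fun m => ht (ψ m))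
    (htt.comp hψ)).comp hφ.tendsto_atTop
  simpa [comp_def, hψφ _] using this

theorem tendsto_comp (hss : SemiSingConv πn π₀) {φ : ℕ → ℕ} (hφ : Tendsto φ atTop atTop)
    (s : ℕ → ℝ) {x : ℕ → X} {x₀ : X} (hx : Tendsto x atTop (𝓝 x₀)) {t : ℕ → ℝ} {t₀ : ℝ}
    (ht : ∀ k, 0 ≤ t k) (htt : Tendsto t atTop (𝓝 t₀)) :
    Tendsto (fun k => (πn (φ k) (t k) (s k, x k)).2) atTop (𝓝 (π₀ t₀ x₀)) := by
  refine tendsto_of_subseq_tendsto fun ns hns => ?_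
  obtain ⟨ms, hms, hφms⟩ := strictMono_subseq_of_tendsto_atTop (hφ.comp hns)
  have hnms : Tendsto (ns ∘ ms) atTop atTop := hns.comp hms.tendsto_atTop
  exact ⟨ms, hss.tendsto_comp_of_strictMono hφms (s ∘ ns ∘ ms) (hx.comp hnms)
    (fun k => ht _) (htt.comp hnms)⟩

theorem flow_neg_mem_of_frequently (hss : SemiSingConv πn π₀) (hπ₀ : IsFlow π₀)
    (hflow : ∀ n, IsFlow (πn n)) {B : Set X} (hB : IsCompact B) {φ : ℕ → ℕ}
    (hφ : Tendsto φ atTop atTop) {w : ℕ → ℝ × X} {x₀ : X}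
    (hw : Tendsto (fun k => (w k).2) atTop (𝓝 x₀)) {t : ℝ} (ht : 0 ≤ t)
    (hback : ∃ᶠ k in atTop, (πn (φ k) (-t) (w k)).2 ∈ B) :
    π₀ (-t) x₀ ∈ B := by
  obtain ⟨y₀, hy₀, ψ, hψ, hy⟩ := hB.tendsto_subseq' hback
  have hforward := hss.tendsto_comp (hφ.comp hψ.tendsto_atTop)
    (fun k => (πn (φ (ψ k)) (-t) (w (ψ k))).1) hy (fun _ => ht) tendsto_const_nhds
  simp only [comp_apply, Prod.mk.eta, (hflow _).apply_apply_neg] at hforward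
  rwa [tendsto_nhds_unique (hw.comp hψ.tendsto_atTop) hforward, hπ₀.apply_neg_apply]

end SemiSingConv

theorem stmt7_general {X : Type*} [MetricSpace X]
    (π₀ : ℝ → X → X) (hπ₀ : IsFlow π₀) (B : Set X) (hBcpt : IsCompact B)
    (hB : IsStableIsolatingBlock π₀ B)
    (πn : ℕ → ℝ → ℝ × X → ℝ × X) (hflow : ∀ n, IsFlow (πn n))
    (hss : SemiSingConv πn π₀) :
    ∃ T₀ > (0:ℝ), ∃ n₀ : ℕ, ∀ T ≥ T₀, ∀ n ≥ n₀,
      GammaSet (πn n) T ((Set.univ : Set ℝ) ×ˢ B) = ∅ := by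
  by_contra! h
  choose T hT n hn z hz using fun k : ℕ => h (k + 1) (by positivity) k
  choose w hwB hback using fun k =>
    exists_frontier_backward_mem_of_mem_GammaSet_univ_prod (hflow (n k)) hB.1 (hz k)
  obtain ⟨x₀, -, φ, hφ, hx⟩ :=
    hBcpt.tendsto_subseq fun k => hB.1.frontier_subset (hwB k)
  have hx₀B : x₀ ∈ frontier B :=
    isClosed_frontier.mem_of_tendsto hx (.of_forall fun k => hwB (φ k))
  obtain ⟨ε, hε, hexit⟩ := hB.2.2.2 x₀ hx₀B
  have ht : ε / 2 ∈ Ioo 0 ε := ⟨by linarith, by linarith⟩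
  have hn_φ : Tendsto (n ∘ φ) atTop atTop :=
    (tendsto_atTop_mono hn tendsto_id).comp hφ.tendsto_atTop
  refine (hexit _ ht).1 (hss.flow_neg_mem_of_frequently hπ₀ hflow hBcpt hn_φ hx ht.1.le
    (Eventually.frequently ?_))
  filter_upwards [tendsto_natCast_atTop_atTop.eventually_ge_atTop (ε / 2)] with k hk
  refine hback (φ k) (ε / 2) ⟨ht.1.le, ?_⟩
  have : (k : ℝ) ≤ φ k := by exact_mod_cast hφ.le_apply
  linarith [hT (φ k)]

/-- If `B` is a compact stable isolating block for `π₀` and `π_n → π₀` semi-singularly,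
then there are `T₀ > 0` and `n₀` such that `Γ^T_{π_n}(ℝ × B) = ∅` for all `T ≥ T₀`
and `n ≥ n₀`. -/
theorem stmt7 {X : Type*} [MetricSpace X] [LocallyCompactSpace X]
    (π₀ : ℝ → X → X) (hπ₀ : IsFlow π₀) (B : Set X) (hBcpt : IsCompact B)
    (hB : IsStableIsolatingBlock π₀ B)
    (πn : ℕ → ℝ → ℝ × X → ℝ × X) (hflow : ∀ n, IsFlow (πn n))
    (hss : SemiSingConv πn π₀) :
    ∃ T₀ > (0:ℝ), ∃ n₀ : ℕ, ∀ T ≥ T₀, ∀ n ≥ n₀,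
      GammaSet (πn n) T ((Set.univ : Set ℝ) ×ˢ B) = ∅ :=
  stmt7_general π₀ hπ₀ B hBcpt hB πn hflow hss
end

section
/- Let X be a locally compact metric space, B ⊆ X compact, N = ℝ × B, π₀ a flow on X, and (π_n) a sequence of flows on ℝ × X converging semi-singularly to π₀. Suppose y_n ∈ N and t_n → ∞ are sequences with y_nπ_n[0,t_n] ⊆ N, and suppose P₂(y_nπ_n t_n) → z̃⁰ in X. Then z̃⁰ ∈ A⁻_{π₀}(B), i.e. z̃⁰π₀(−t) ∈ B for all t ≥ 0. -/
open Set Metric Filter Topology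

/-! The backward orbit of `z̃⁰` is recovered from the orbit segments ending at the
endpoints `y_n π_n t_n`: for `s ≥ 0`, the points `P₂(y_n π_n (t_n - s))` lie in the compact
set `B`, so a subsequence converges to some `w ∈ B`. Flowing them for the fixed time `s` gives
back the endpoints, so semi-singular convergence yields `w π₀ s = z̃⁰`, i.e.
`z̃⁰ π₀ (-s) = w ∈ B`. -/

theorem IsFlow.apply_neg_apply_s8 {Z : Type*} [MetricSpace Z] {ρ : ℝ → Z → Z} (hρ : IsFlow ρ)
    (s : ℝ) (z : Z) : ρ (-s) (ρ s z) = z := by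
  rw [← hρ.2.2, neg_add_cancel, hρ.2.1]

theorem exists_tendsto_eq_on_subseq {X : Type*} [TopologicalSpace X] {x : ℕ → X} {w : X}
    {φ : ℕ → ℕ} (hφ : StrictMono φ) (hx : Tendsto (x ∘ φ) atTop (𝓝 w)) :
    ∃ Y : ℕ → X, Tendsto Y atTop (𝓝 w) ∧ ∀ k, Y (φ k) = x (φ k) := by
  classical
  refine ⟨fun n => if n ∈ range φ then x n else w, ?_, fun k => if_pos ⟨k, rfl⟩⟩
  rw [tendsto_atTop_nhds] at hx ⊢
  intro U hwU hU
  obtain ⟨K, hK⟩ := hx U hwU hU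
  refine ⟨φ K, fun n hn => ?_⟩
  split_ifs with hrange
  · obtain ⟨k, rfl⟩ := hrange
    exact hK k (hφ.le_iff_le.mp hn)
  · exact hwU

/-- Semi-singular convergence only constrains full sequences of base points; extending a
convergent subsequence to one lets it be applied along subsequences. -/
theorem SemiSingConv.apply_eq_of_subseq {X : Type*} [MetricSpace X]
    {πn : ℕ → ℝ → ℝ × X → ℝ × X} {π₀ : ℝ → X → X} (hss : SemiSingConv πn π₀)
    {p : ℕ → ℝ × X} {φ : ℕ → ℕ} (hφ : StrictMono φ) {s : ℝ} (hs : 0 ≤ s) {w z : X}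
    (hw : Tendsto (fun k => (p (φ k)).2) atTop (𝓝 w))
    (hz : Tendsto (fun k => (πn (φ k) s (p (φ k))).2) atTop (𝓝 z)) :
    π₀ s w = z := by
  obtain ⟨Y, hY, hYφ⟩ := exists_tendsto_eq_on_subseq (x := fun n => (p n).2) hφ hw
  have hlim := (hss (fun n => (p n).1) Y w (fun _ => s) s hY (fun _ => hs)
    tendsto_const_nhds).comp hφ.tendsto_atTop
  refine tendsto_nhds_unique (hlim.congr fun k => ?_) hz
  simp only [Function.comp_apply, hYφ k]

theorem stmt8_general {X : Type*} [MetricSpace X]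
    (π₀ : ℝ → X → X) (hπ₀ : IsFlow π₀) (B : Set X) (hBcpt : IsCompact B)
    (πn : ℕ → ℝ → ℝ × X → ℝ × X) (hflow : ∀ n, IsFlow (πn n))
    (hss : SemiSingConv πn π₀)
    (y : ℕ → ℝ × X)
    (t : ℕ → ℝ) (ht0 : ∀ n, 0 ≤ t n) (ht : Filter.Tendsto t Filter.atTop Filter.atTop)
    (horbit : ∀ n, ∀ r ∈ Set.Icc 0 (t n), πn n r (y n) ∈ (Set.univ : Set ℝ) ×ˢ B)
    (z : X) (hz : Filter.Tendsto (fun n => (πn n (t n) (y n)).2) Filter.atTop (nhds z)) :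
    z ∈ Aminus π₀ B := by
  have hzB : z ∈ B := hBcpt.isClosed.mem_of_tendsto hz
    (Eventually.of_forall fun n => (horbit n (t n) ⟨ht0 n, le_rfl⟩).2)
  refine ⟨hzB, fun s hs => ?_⟩
  set p : ℕ → ℝ × X := fun n => πn n (max (t n - s) 0) (y n)
  have hpB : ∀ n, (p n).2 ∈ B := fun n =>
    (horbit n _ ⟨le_max_right _ _, max_le (by linarith) (ht0 n)⟩).2
  obtain ⟨w, hwB, φ, hφ, hw⟩ := hBcpt.tendsto_subseq hpB
  have hend : ∀ᶠ n in atTop, (πn n (t n) (y n)).2 = (πn n s (p n)).2 := by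
    filter_upwards [ht.eventually_ge_atTop s] with n hn
    rw [← (hflow n).2.2, max_eq_left (sub_nonneg.2 hn), add_sub_cancel]
  have hsw : π₀ s w = z :=
    hss.apply_eq_of_subseq hφ hs hw ((hz.congr' hend).comp hφ.tendsto_atTop)
  rw [← hsw, hπ₀.apply_neg_apply_s8]
  exact hwB

/-- If `y_n ∈ N = ℝ × B` (`B` compact), `t_n → ∞`, `y_n π_n [0,t_n] ⊆ N` and the
projected endpoints `P₂(y_n π_n t_n)` converge to `z̃⁰`, then `z̃⁰ ∈ A⁻_{π₀}(B)`. -/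
theorem stmt8 {X : Type*} [MetricSpace X] [LocallyCompactSpace X]
    (π₀ : ℝ → X → X) (hπ₀ : IsFlow π₀) (B : Set X) (hBcpt : IsCompact B)
    (πn : ℕ → ℝ → ℝ × X → ℝ × X) (hflow : ∀ n, IsFlow (πn n))
    (hss : SemiSingConv πn π₀)
    (y : ℕ → ℝ × X) (hy : ∀ n, y n ∈ (Set.univ : Set ℝ) ×ˢ B)
    (t : ℕ → ℝ) (ht0 : ∀ n, 0 ≤ t n) (ht : Filter.Tendsto t Filter.atTop Filter.atTop)
    (horbit : ∀ n, ∀ r ∈ Set.Icc 0 (t n), πn n r (y n) ∈ (Set.univ : Set ℝ) ×ˢ B)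
    (z : X) (hz : Filter.Tendsto (fun n => (πn n (t n) (y n)).2) Filter.atTop (nhds z)) :
    z ∈ Aminus π₀ B :=
  stmt8_general π₀ hπ₀ B hBcpt πn hflow hss y t ht0 ht horbit z hz
end

section
/- Let π₀ be a flow on a locally compact metric space X, B ⊆ X closed, N = ℝ × B, π the product flow on ℝ × X, and π_n a skew product flow on ℝ × X. Let T > 0 and δ > 0 be such that U_δ(G^T_π(N)) ⊆ N, and suppose d(xπ_n t, xπt) < δ for all t ∈ [−T,T] and x ∈ N. Then G^{2T}_π(N) ⊆ G^T_{π_n}(N). -/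
open Set Metric Filter Topology

theorem IsFlow.prodFlow {X : Type*} [MetricSpace X] {π₀ : ℝ → X → X} (hπ₀ : IsFlow π₀) :
    IsFlow (prodFlow π₀) := by
  refine ⟨?_, fun z => ?_, fun s t z => ?_⟩
  · exact (continuous_snd.fst.add continuous_fst).prodMk
      (hπ₀.1.comp (continuous_fst.prodMk continuous_snd.snd))
  · simp [_root_.prodFlow, hπ₀.2.1]
  · simp only [_root_.prodFlow, hπ₀.2.2 s t, Prod.mk.injEq, and_true]
    ring

namespace IsFlow

variable {Z : Type*} [MetricSpace Z] {ρ : ℝ → Z → Z}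

theorem Gset_subset_closure (hρ : IsFlow ρ) {T : ℝ} (hT : 0 ≤ T) (Y : Set Z) :
    Gset ρ T Y ⊆ closure Y := fun z hz => by
  simpa [hρ.2.1] using hz 0 ⟨by linarith, hT⟩

theorem mapsTo_Gset_add (hρ : IsFlow ρ) {S T t : ℝ} (ht : t ∈ Icc (-S) S) (Y : Set Z) :
    MapsTo (ρ t) (Gset ρ (S + T) Y) (Gset ρ T Y) := fun z hz s hs => by
  rw [← hρ.2.2]
  exact hz (s + t) ⟨by linarith [hs.1, ht.1], by linarith [hs.2, ht.2]⟩

theorem Gset_two_mul_subset (hρ : IsFlow ρ) (σ : ℝ → Z → Z) {Y : Set Z} (hY : IsClosed Y)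
    {T δ : ℝ} (hthick : thickening δ (Gset ρ T Y) ⊆ Y)
    (hclose : ∀ z ∈ Y, ∀ t ∈ Icc (-T) T, dist (σ t z) (ρ t z) < δ) :
    Gset ρ (2 * T) Y ⊆ Gset σ T Y := by
  intro z hz t ht
  have hT : 0 ≤ T := by linarith [ht.1, ht.2]
  have hzY : z ∈ Y := hY.closure_eq ▸ hρ.Gset_subset_closure (by linarith) Y hz
  have hflowed : ρ t z ∈ Gset ρ T Y := hρ.mapsTo_Gset_add ht Y (two_mul T ▸ hz)
  exact subset_closure (hthick (mem_thickening_iff.mpr ⟨_, hflowed, hclose z hzY t ht⟩))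

end IsFlow

theorem stmt11_general {X : Type*} [MetricSpace X]
    (π₀ : ℝ → X → X) (hπ₀ : IsFlow π₀) (B : Set X) (hBclosed : IsClosed B)
    (πn : ℝ → ℝ × X → ℝ × X)
    (T δ : ℝ)
    (h : Metric.thickening δ (Gset (prodFlow π₀) T ((Set.univ : Set ℝ) ×ˢ B)) ⊆
      (Set.univ : Set ℝ) ×ˢ B)
    (hclose : ∀ x ∈ (Set.univ : Set ℝ) ×ˢ B, ∀ t ∈ Set.Icc (-T) T,
      dist (πn t x) (prodFlow π₀ t x) < δ) :
    Gset (prodFlow π₀) (2 * T) ((Set.univ : Set ℝ) ×ˢ B) ⊆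
      Gset πn T ((Set.univ : Set ℝ) ×ˢ B) :=
  hπ₀.prodFlow.Gset_two_mul_subset πn (isClosed_univ.prod hBclosed) h hclose

/-- If `U_δ(G^T_π(N)) ⊆ N` and `π_n` is `δ`-close to `π` on `N` for times in `[−T,T]`,
then `G^{2T}_π(N) ⊆ G^T_{π_n}(N)`. -/
theorem stmt11 {X : Type*} [MetricSpace X] [LocallyCompactSpace X]
    (π₀ : ℝ → X → X) (hπ₀ : IsFlow π₀) (B : Set X) (hBclosed : IsClosed B)
    (πn : ℝ → ℝ × X → ℝ × X) (hflow : IsFlow πn) (hskew : IsSkewFlow πn)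
    (T δ : ℝ) (hT : 0 < T) (hδ : 0 < δ)
    (h : Metric.thickening δ (Gset (prodFlow π₀) T ((Set.univ : Set ℝ) ×ˢ B)) ⊆
      (Set.univ : Set ℝ) ×ˢ B)
    (hclose : ∀ x ∈ (Set.univ : Set ℝ) ×ˢ B, ∀ t ∈ Set.Icc (-T) T,
      dist (πn t x) (prodFlow π₀ t x) < δ) :
    Gset (prodFlow π₀) (2 * T) ((Set.univ : Set ℝ) ×ˢ B) ⊆
      Gset πn T ((Set.univ : Set ℝ) ×ˢ B) :=
  stmt11_general π₀ hπ₀ B hBclosed πn T δ h hclose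
end

section
/- Let π₀ be a flow on a locally compact metric space X, B ⊆ X compact, N = ℝ × B, π the product flow on ℝ × X, and π_n a skew product flow on ℝ × X. Let T > 0 and δ > 0 be such that cl U_δ(B) is compact, U_δ(G^T_{π_n}(N)) ⊆ N, and d(xπ_n t, xπt) < δ/3 for all t ∈ [−T,T] and x ∈ ℝ × cl U_δ(B). Then there exists ε > 0, depending only on π₀, B, T and δ, such that U_ε(G^{2T}_{π_n}(N)) ⊆ G^T_{π_n}(N). -/
/-!
Flowing a point `y ∈ G^{2T}_{π_n}(N)` for a time `t ∈ [-T, T]` lands in `G^T_{π_n}(N)`. A point `z`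
that is `ε`-close to `y` stays `δ`-close to `y` along `π_n` for these times: the first coordinates
of a skew product flow keep their distance, and the second ones are each `δ/3`-close to the
`π₀`-orbits, which stay `δ/3`-close by uniform continuity of `π₀` on `[-T, T] × cl U_δ(B)`. Hence
`zπ_n t ∈ U_δ(G^T_{π_n}(N)) ⊆ N`, and `ε` is only a modulus of that uniform continuity.
-/

open Set Metric Filter Topology

theorem IsFlow.mem_closure_of_mem_Gset {Z : Type*} [MetricSpace Z] {ρ : ℝ → Z → Z}
    (hρ : IsFlow ρ) {T : ℝ} (hT : 0 ≤ T) {Y : Set Z} {z : Z} (hz : z ∈ Gset ρ T Y) :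
    z ∈ closure Y :=
  hρ.2.1 z ▸ hz 0 ⟨by linarith, hT⟩

theorem IsFlow.apply_mem_Gset_of_mem_Gset_add {Z : Type*} [MetricSpace Z] {ρ : ℝ → Z → Z}
    (hρ : IsFlow ρ) {S T : ℝ} {Y : Set Z} {z : Z} (hz : z ∈ Gset ρ (S + T) Y) {t : ℝ}
    (ht : t ∈ Icc (-S) S) : ρ t z ∈ Gset ρ T Y := by
  intro s hs
  rw [← hρ.2.2 s t z]
  exact hz (s + t) ⟨by linarith [hs.1, ht.1], by linarith [hs.2, ht.2]⟩

theorem IsSkewFlow.dist_fst_apply {X : Type*} [MetricSpace X] {σ : ℝ → ℝ × X → ℝ × X}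
    (hσ : IsSkewFlow σ) (t : ℝ) (z y : ℝ × X) : dist (σ t z).1 (σ t y).1 = dist z.1 y.1 := by
  rw [hσ t z.1 z.2, hσ t y.1 y.2, Real.dist_eq, Real.dist_eq, add_sub_add_right_eq_sub]

theorem IsSkewFlow.dist_apply_lt {X : Type*} [MetricSpace X] {σ : ℝ → ℝ × X → ℝ × X}
    (hσ : IsSkewFlow σ) {π₀ : ℝ → X → X} {t δ : ℝ} {z y : ℝ × X} (hfst : dist z.1 y.1 < δ)
    (hz : dist (σ t z) (prodFlow π₀ t z) < δ / 3) (hy : dist (σ t y) (prodFlow π₀ t y) < δ / 3)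
    (hπ₀ : dist (π₀ t z.2) (π₀ t y.2) < δ / 3) : dist (σ t z) (σ t y) < δ := by
  refine max_lt (hσ.dist_fst_apply t z y ▸ hfst) ?_
  have hz₂ : dist (σ t z).2 (π₀ t z.2) < δ / 3 := (le_max_right _ _).trans_lt hz
  have hy₂ : dist (σ t y).2 (π₀ t y.2) < δ / 3 := (le_max_right _ _).trans_lt hy
  calc dist (σ t z).2 (σ t y).2
      ≤ dist (σ t z).2 (π₀ t z.2) + dist (π₀ t z.2) (π₀ t y.2) + dist (π₀ t y.2) (σ t y).2 :=
        dist_triangle4 _ _ _ _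
    _ < δ / 3 + δ / 3 + δ / 3 := by rw [dist_comm (π₀ t y.2)]; gcongr
    _ = δ := by ring

theorem exists_pos_forall_dist_flow_lt {X : Type*} [MetricSpace X] {ρ : ℝ → X → X}
    (hρ : Continuous fun p : ℝ × X => ρ p.1 p.2) {I : Set ℝ} {K : Set X}
    (hI : IsCompact I) (hK : IsCompact K) {η : ℝ} (hη : 0 < η) :
    ∃ ε > 0, ∀ x ∈ K, ∀ y ∈ K, dist x y < ε → ∀ t ∈ I, dist (ρ t x) (ρ t y) < η := by
  obtain ⟨ε, hε, h⟩ := Metric.uniformContinuousOn_iff.1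
    ((hI.prod hK).uniformContinuousOn_of_continuous hρ.continuousOn) η hη
  refine ⟨ε, hε, fun x hx y hy hxy t ht => h (t, x) ⟨ht, hx⟩ (t, y) ⟨ht, hy⟩ ?_⟩
  simpa [Prod.dist_eq] using hxy

theorem stmt12_general {X : Type*} [MetricSpace X]
    (π₀ : ℝ → X → X) (hπ₀ : IsFlow π₀) (B : Set X)
    (T δ : ℝ) (hδ : 0 < δ)
    (hcpt : IsCompact (closure (Metric.thickening δ B))) :
    ∃ ε > (0:ℝ), ∀ πn : ℝ → ℝ × X → ℝ × X, IsFlow πn → IsSkewFlow πn →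
      Metric.thickening δ (Gset πn T ((Set.univ : Set ℝ) ×ˢ B)) ⊆
        (Set.univ : Set ℝ) ×ˢ B →
      (∀ x ∈ (Set.univ : Set ℝ) ×ˢ closure (Metric.thickening δ B),
        ∀ t ∈ Set.Icc (-T) T, dist (πn t x) (prodFlow π₀ t x) < δ / 3) →
      Metric.thickening ε (Gset πn (2 * T) ((Set.univ : Set ℝ) ×ˢ B)) ⊆
        Gset πn T ((Set.univ : Set ℝ) ×ˢ B) := by
  obtain ⟨ε, hε, hπ₀ε⟩ := exists_pos_forall_dist_flow_lt hπ₀.1 isCompact_Icc hcpt (η := δ / 3) (by positivity)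
  refine ⟨min ε δ, lt_min hε hδ, fun πn hπn hskew hsub hclose z hz t ht => ?_⟩
  obtain ⟨y, hyG, hzy⟩ := mem_thickening_iff.1 hz
  have hy : y.2 ∈ closure B := by
    simpa [closure_prod_eq] using hπn.mem_closure_of_mem_Gset (by linarith [ht.1, ht.2]) hyG
  have hyK : y.2 ∈ closure (thickening δ B) := closure_mono (self_subset_thickening hδ B) hy
  have hzy₂ : dist z.2 y.2 < min ε δ := (le_max_right _ _).trans_lt hzy
  have hzK : z.2 ∈ closure (thickening δ B) := subset_closure <| thickening_closure (s := B) ▸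
    mem_thickening_iff.2 ⟨y.2, hy, hzy₂.trans_le (min_le_right _ _)⟩
  have hyt : πn t y ∈ Gset πn T (univ ×ˢ B) :=
    hπn.apply_mem_Gset_of_mem_Gset_add (by rwa [two_mul] at hyG) ht
  have hzyt : dist (πn t z) (πn t y) < δ :=
    hskew.dist_apply_lt ((le_max_left _ _).trans_lt (hzy.trans_le (min_le_right _ _)))
      (hclose z ⟨trivial, hzK⟩ t ht) (hclose y ⟨trivial, hyK⟩ t ht)
      (hπ₀ε _ hzK _ hyK (hzy₂.trans_le (min_le_left _ _)) t ht)
  exact subset_closure (hsub (mem_thickening_iff.2 ⟨_, hyt, hzyt⟩))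

/-- If `cl U_δ(B)` is compact, `U_δ(G^T_{π_n}(N)) ⊆ N` and `π_n` is `δ/3`-close to the
product flow `π` on `ℝ × cl U_δ(B)` for times in `[−T,T]`, then there is `ε > 0`
(depending only on `π₀`, `B`, `T` and `δ`) with `U_ε(G^{2T}_{π_n}(N)) ⊆ G^T_{π_n}(N)`. -/
theorem stmt12 {X : Type*} [MetricSpace X] [LocallyCompactSpace X]
    (π₀ : ℝ → X → X) (hπ₀ : IsFlow π₀) (B : Set X) (hBcpt : IsCompact B)
    (T δ : ℝ) (hT : 0 < T) (hδ : 0 < δ)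
    (hcpt : IsCompact (closure (Metric.thickening δ B))) :
    ∃ ε > (0:ℝ), ∀ πn : ℝ → ℝ × X → ℝ × X, IsFlow πn → IsSkewFlow πn →
      Metric.thickening δ (Gset πn T ((Set.univ : Set ℝ) ×ˢ B)) ⊆
        (Set.univ : Set ℝ) ×ˢ B →
      (∀ x ∈ (Set.univ : Set ℝ) ×ˢ closure (Metric.thickening δ B),
        ∀ t ∈ Set.Icc (-T) T, dist (πn t x) (prodFlow π₀ t x) < δ / 3) →
      Metric.thickening ε (Gset πn (2 * T) ((Set.univ : Set ℝ) ×ˢ B)) ⊆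
        Gset πn T ((Set.univ : Set ℝ) ×ˢ B) :=
  stmt12_general π₀ hπ₀ B T δ hδ hcpt
end

section
/- Let (φ,θ) be a two-sided process over a base set P on a locally compact metric space X, let π₀ be a flow on X with compact stable isolating block B and A_{π₀}(B) ≠ ∅, and let π be the product flow of π₀ on ℝ × X. Let P* ⊆ P contain exactly one representative of each θ-orbit, and for p ∈ P let π_p be the associated skew product flow. Suppose there are constants T, δ, ε > 0 such that for every p ∈ P*: Γ^T_{π_p}(ℝ × B) = ∅, G^T_{π_p}(ℝ × B) ≠ ∅, cl U_δ(B) is compact, U_δ(G^{2T}_π(ℝ × B)) ⊆ G^T_π(ℝ × B), U_δ(G^T_π(ℝ × B)) ⊆ ℝ × B, U_δ(G^T_π(U_δ(ℝ × B))) ⊆ ℝ × B, d((s,x)πt, (s,x)π_p t) < δ/3 for all t ∈ [−T,T] and (s,x) ∈ ℝ × cl U_δ(B), and U_ε(A_{π_p}(ℝ × B)) ⊆ G_p := G^T_{π_p}(ℝ × B). Define D(q) = {x ∈ X : ∃ s ∈ ℝ, p ∈ P* with pθs = q and (s,x) ∈ G_p} and A(q) = {x ∈ X : ∃ s ∈ ℝ,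 p ∈ P* with pθs = q and (s,x) ∈ A_{π_p}(ℝ × B)} for q ∈ P. Then each D(q) is closed and D is forward invariant (x ∈ D(q) and t ≥ 0 imply xφ^q t ∈ D(qθt)), the map A is invariant (A(q)φ^q t = A(qθt) for all t ≥ 0), each A(q) is nonempty and compact, and U_ε(A(q)) ⊆ D(q) for all q ∈ P. -/
open Set Metric Filter Topology

/-- A two-sided process `(φ,θ)` over a base set `P` on a metric space `X`:
`θ` is a (not necessarily continuous) flow on `P` and `φ` is a cocycle over `θ`,
continuous in `(t,x)` for each fixed `p`. -/
structure TwoSidedProcess (P : Type*) (X : Type*) [MetricSpace X] where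
  θ : ℝ → P → P
  φ : ℝ → P → X → X
  θ_zero : ∀ p, θ 0 p = p
  θ_add : ∀ (t s : ℝ) (p : P), θ (t + s) p = θ t (θ s p)
  φ_cont : ∀ p : P, Continuous fun q : ℝ × X => φ q.1 p q.2
  φ_zero : ∀ (p : P) (x : X), φ 0 p x = x
  φ_add : ∀ (t s : ℝ) (p : P) (x : X), φ (t + s) p x = φ t (θ s p) (φ s p x)

/-- The skew product flow `π_p` associated to a process: `(s,x)π_p t = (s+t, xφ^{pθs}t)`. -/
def procSkew {P X : Type*} [MetricSpace X] (pr : TwoSidedProcess P X) (p : P) :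
    ℝ → ℝ × X → ℝ × X :=
  fun t q => (q.1 + t, pr.φ t (pr.θ q.1 p) q.2)

/-- The set `D(q)` built from the stable neighborhoods `G_p = G^T_{π_p}(ℝ × B)`. -/
def Dset {P X : Type*} [MetricSpace X] (pr : TwoSidedProcess P X) (Pstar : Set P)
    (T : ℝ) (B : Set X) (q : P) : Set X :=
  {x : X | ∃ s : ℝ, ∃ p ∈ Pstar, pr.θ s p = q ∧
    (s, x) ∈ Gset (procSkew pr p) T ((Set.univ : Set ℝ) ×ˢ B)}

/-- The set `A(q)` built from the invariant sets `A_{π_p}(ℝ × B)`. -/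
def Aset {P X : Type*} [MetricSpace X] (pr : TwoSidedProcess P X) (Pstar : Set P)
    (B : Set X) (q : P) : Set X :=
  {x : X | ∃ s : ℝ, ∃ p ∈ Pstar, pr.θ s p = q ∧
    (s, x) ∈ Ainv (procSkew pr p) ((Set.univ : Set ℝ) ×ˢ B)}

/-!
Since `B` is closed and every base point is a `θ`-translate of a representative in `P*`, the
fibres are `D(q) = {x | xφ^q t ∈ B for |t| ≤ T}` and `A(q) = {x | xφ^q t ∈ B for all t}`.
`Γ^T = ∅` says that an orbit staying in `B` on `[-T, T]` is not on `∂B` at time `T`; looking at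
the first exit time from `B` shows that such an orbit never leaves `B` afterwards, which is the
forward invariance of `D`. A point of `A_{π₀}(B)` shadowed by the process within `δ/3` stays in
`B` on `[-T, T]`, hence forever after, in every fibre; pulling it back from time `-n` and passing
to a convergent subsequence in the compact set `B` gives a point of `A(q)`.
-/

section Flow

variable {Z : Type*} [MetricSpace Z] {ρ : ℝ → Z → Z} {Y : Set Z} {z : Z}

lemma forall_mem_of_mem_Ainv (hz : z ∈ Ainv ρ Y) (t : ℝ) : ρ t z ∈ Y := by
  obtain ⟨⟨-, hplus⟩, -, hminus⟩ := hz
  rcases le_or_gt 0 t with ht | ht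
  · exact hplus t ht
  · simpa using hminus (-t) (by linarith)

lemma mem_Ainv_of_forall_mem (h0 : ρ 0 z = z) (h : ∀ t, ρ t z ∈ Y) : z ∈ Ainv ρ Y :=
  have hz : z ∈ Y := h0 ▸ h 0
  ⟨⟨hz, fun t _ => h t⟩, hz, fun t _ => h (-t)⟩

lemma mem_Gset_iff_of_isClosed (hY : IsClosed Y) {T : ℝ} :
    z ∈ Gset ρ T Y ↔ ∀ t ∈ Icc (-T) T, ρ t z ∈ Y := by
  simp only [Gset, hY.closure_eq]
  rfl

end Flow

lemma Continuous.exists_first_mem_frontier {X : Type*} [TopologicalSpace X] {f : ℝ → X}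
    (hf : Continuous f) {B : Set X} (hB : IsClosed B) {a b c : ℝ} (hab : a < b)
    (hfab : ∀ u ∈ Icc a b, f u ∈ B) (hbc : b ≤ c) (hc : f c ∉ B) :
    ∃ t₀ ∈ Icc b c, (∀ u ∈ Icc a t₀, f u ∈ B) ∧ f t₀ ∈ frontier B := by
  set F := Icc b c ∩ f ⁻¹' (interior B)ᶜ
  have hcF : c ∈ F := ⟨⟨hbc, le_rfl⟩, fun h => hc (interior_subset h)⟩
  have hFbdd : BddBelow F := ⟨b, fun _ hu => hu.1.1⟩
  have ht₀ : sInf F ∈ F :=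
    (isClosed_Icc.inter (isOpen_interior.isClosed_compl.preimage hf)).csInf_mem ⟨c, hcF⟩ hFbdd
  set t₀ := sInf F
  have hbelow : ∀ u ∈ Ico a t₀, f u ∈ B := by
    intro u ⟨hau, hut₀⟩
    rcases le_or_gt u b with hub | hbu
    · exact hfab u ⟨hau, hub⟩
    · by_contra hu
      have huF : u ∈ F := ⟨⟨hbu.le, hut₀.le.trans (csInf_le hFbdd hcF)⟩,
        fun h => hu (interior_subset h)⟩
      exact (csInf_le hFbdd huF).not_gt hut₀
  have ht₀B : f t₀ ∈ B := by
    have hat₀ : t₀ ∈ closure (Ico a t₀) := by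
      rw [closure_Ico (hab.trans_le ht₀.1.1).ne]
      exact right_mem_Icc.2 (hab.trans_le ht₀.1.1).le
    simpa [hB.closure_eq] using hf.continuousWithinAt.mem_closure hat₀ hbelow
  refine ⟨t₀, ⟨ht₀.1.1, csInf_le hFbdd hcF⟩, fun u ⟨hau, hut₀⟩ => ?_, ?_⟩
  · rcases hut₀.lt_or_eq with hlt | rfl
    · exact hbelow u ⟨hau, hlt⟩
    · exact ht₀B
  · rw [hB.frontier_eq]
    exact ⟨ht₀B, ht₀.2⟩

namespace TwoSidedProcess

variable {P X : Type*} [MetricSpace X] (pr : TwoSidedProcess P X)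

lemma continuous_φ_apply (t : ℝ) (q : P) : Continuous (pr.φ t q) :=
  (pr.φ_cont q).comp (Continuous.prodMk_right t)

lemma continuous_φ_time (q : P) (x : X) : Continuous fun t => pr.φ t q x :=
  (pr.φ_cont q).comp (continuous_id.prodMk continuous_const)

lemma θ_θ_neg (t : ℝ) (q : P) : pr.θ t (pr.θ (-t) q) = q := by
  rw [← pr.θ_add, add_neg_cancel, pr.θ_zero]

lemma θ_neg_θ (t : ℝ) (q : P) : pr.θ (-t) (pr.θ t q) = q := by
  rw [← pr.θ_add, neg_add_cancel, pr.θ_zero]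

lemma φ_φ_neg (u t : ℝ) (q : P) (y : X) :
    pr.φ u q (pr.φ (-t) (pr.θ t q) y) = pr.φ (u - t) (pr.θ t q) y := by
  nth_rw 1 [← pr.θ_neg_θ t q]
  rw [← pr.φ_add, sub_eq_add_neg]

lemma image_setOf_forall_φ_mem (B : Set X) (t : ℝ) (q : P) :
    pr.φ t q '' {x | ∀ u, pr.φ u q x ∈ B} = {y | ∀ u, pr.φ u (pr.θ t q) y ∈ B} := by
  ext y
  constructor
  · rintro ⟨x, hx, rfl⟩ u
    rw [← pr.φ_add]
    exact hx _
  · intro hy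
    refine ⟨pr.φ (-t) (pr.θ t q) y, fun u => ?_, ?_⟩
    · rw [pr.φ_φ_neg]
      exact hy _
    · rw [pr.φ_φ_neg, sub_self, pr.φ_zero]

lemma mem_Gset_procSkew_iff {B : Set X} (hB : IsClosed B) (p : P) (T s : ℝ) (x : X) :
    (s, x) ∈ Gset (procSkew pr p) T (univ ×ˢ B) ↔
      ∀ t ∈ Icc (-T) T, pr.φ t (pr.θ s p) x ∈ B := by
  rw [mem_Gset_iff_of_isClosed (by exact isClosed_univ.prod hB)]
  simp [procSkew]

lemma mem_Ainv_procSkew_iff (B : Set X) (p : P) (s : ℝ) (x : X) :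
    (s, x) ∈ Ainv (procSkew pr p) (univ ×ˢ B) ↔ ∀ t, pr.φ t (pr.θ s p) x ∈ B := by
  refine ⟨fun h t => (forall_mem_of_mem_Ainv h t).2, fun h =>
    mem_Ainv_of_forall_mem (by simp [procSkew, pr.φ_zero]) fun t => ⟨trivial, h t⟩⟩

variable {pr} {Pstar : Set P}

lemma Dset_eq (hrep : ∀ q : P, ∃ p ∈ Pstar, ∃ s : ℝ, pr.θ s p = q) {B : Set X} (hB : IsClosed B)
    (T : ℝ) (q : P) :
    Dset pr Pstar T B q = {x | ∀ t ∈ Icc (-T) T, pr.φ t q x ∈ B} := by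
  ext x
  constructor
  · rintro ⟨s, p, -, rfl, hG⟩
    exact (pr.mem_Gset_procSkew_iff hB p T s x).1 hG
  · intro hx
    obtain ⟨p, hp, s, rfl⟩ := hrep q
    exact ⟨s, p, hp, rfl, (pr.mem_Gset_procSkew_iff hB p T s x).2 hx⟩

lemma Aset_eq (hrep : ∀ q : P, ∃ p ∈ Pstar, ∃ s : ℝ, pr.θ s p = q) (B : Set X) (q : P) :
    Aset pr Pstar B q = {x | ∀ t, pr.φ t q x ∈ B} := by
  ext x
  constructor
  · rintro ⟨s, p, -, rfl, hA⟩
    exact (pr.mem_Ainv_procSkew_iff B p s x).1 hA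
  · intro hx
    obtain ⟨p, hp, s, rfl⟩ := hrep q
    exact ⟨s, p, hp, rfl, (pr.mem_Ainv_procSkew_iff B p s x).2 hx⟩

variable (pr)

lemma φ_notMem_frontier_of_GammaSet_eq_empty {Pstar : Set P}
    (hrep : ∀ q : P, ∃ p ∈ Pstar, ∃ s : ℝ, pr.θ s p = q) {B : Set X} (hB : IsClosed B) {T : ℝ}
    (hT : 0 ≤ T) (hΓ : ∀ p ∈ Pstar, GammaSet (procSkew pr p) T (univ ×ˢ B) = ∅) {q : P} {x : X}
    (hx : ∀ t ∈ Icc (-T) T, pr.φ t q x ∈ B) : pr.φ T q x ∉ frontier B := by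
  intro hfr
  obtain ⟨p, hp, s, rfl⟩ := hrep q
  have hΓx : (s, x) ∈ GammaSet (procSkew pr p) T (univ ×ˢ B) := by
    refine ⟨(pr.mem_Gset_procSkew_iff hB p T s x).2 hx, T, ⟨hT, le_rfl⟩, ?_⟩
    rw [frontier_univ_prod_eq]
    exact ⟨trivial, hfr⟩
  simp [hΓ p hp] at hΓx

lemma φ_mem_of_forall_Icc_mem {B : Set X} (hB : IsClosed B) {T : ℝ} (hT : 0 < T)
    (hΓ : ∀ q x, (∀ t ∈ Icc (-T) T, pr.φ t q x ∈ B) → pr.φ T q x ∉ frontier B)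
    {q : P} {x : X} (hx : ∀ t ∈ Icc (-T) T, pr.φ t q x ∈ B) {t : ℝ} (ht : -T ≤ t) :
    pr.φ t q x ∈ B := by
  by_contra hxt
  have hTt : T ≤ t := by
    by_contra! htT
    exact hxt (hx t ⟨ht, htT.le⟩)
  obtain ⟨t₀, ⟨hTt₀, -⟩, hstay, hfr⟩ :=
    (pr.continuous_φ_time q x).exists_first_mem_frontier hB (by linarith) hx hTt hxt
  refine hΓ (pr.θ (t₀ - T) q) (pr.φ (t₀ - T) q x) (fun u hu => ?_) ?_
  · rw [← pr.φ_add]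
    exact hstay _ ⟨by linarith [hu.1], by linarith [hu.2]⟩
  · rwa [← pr.φ_add, add_sub_cancel]

lemma exists_forall_φ_mem {K : Set X} (hK : IsCompact K) {x₀ : X}
    (hx₀ : ∀ q t, 0 ≤ t → pr.φ t q x₀ ∈ K) (q : P) : ∃ a, ∀ t, pr.φ t q a ∈ K := by
  set z : ℕ → X := fun n => pr.φ n (pr.θ (-n) q) x₀
  have hz : ∀ (n : ℕ) (t : ℝ), -(n : ℝ) ≤ t → pr.φ t q (z n) ∈ K := by
    intro n t ht
    nth_rw 1 [← pr.θ_θ_neg n q]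
    rw [← pr.φ_add]
    exact hx₀ _ _ (by linarith)
  obtain ⟨a, -, σ, hσ, hconv⟩ :=
    hK.tendsto_subseq fun n => by simpa [pr.φ_zero] using hz n 0 (by simp)
  refine ⟨a, fun t => hK.isClosed.mem_of_tendsto
    (((pr.continuous_φ_apply t q).tendsto a).comp hconv) ?_⟩
  filter_upwards [eventually_ge_atTop ⌈-t⌉₊] with k hk
  refine hz (σ k) t ?_
  have : (⌈-t⌉₊ : ℝ) ≤ σ k := by exact_mod_cast hk.trans hσ.le_apply
  linarith [Nat.le_ceil (-t)]

lemma φ_mem_of_dist_prodFlow_lt {π₀ : ℝ → X → X} (hπ₀ : IsFlow π₀) {B : Set X} (hB : IsClosed B)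
    {T δ : ℝ} (hGB : thickening δ (Gset (prodFlow π₀) T (univ ×ˢ B)) ⊆ univ ×ˢ B)
    {x : X} (hx : x ∈ Ainv π₀ B) {p : P} {s t : ℝ}
    (hd : dist (prodFlow π₀ t (s, x)) (procSkew pr p t (s, x)) < δ) :
    pr.φ t (pr.θ s p) x ∈ B := by
  have hG : prodFlow π₀ t (s, x) ∈ Gset (prodFlow π₀) T (univ ×ˢ B) := by
    rw [mem_Gset_iff_of_isClosed (by exact isClosed_univ.prod hB)]
    intro u _
    refine ⟨trivial, ?_⟩
    simpa only [prodFlow, ← hπ₀.2.2] using forall_mem_of_mem_Ainv hx (u + t)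
  exact (hGB (mem_thickening_iff.2 ⟨_, hG, by rwa [dist_comm]⟩)).2

lemma isClosed_setOf_forall_φ_mem {B : Set X} (hB : IsClosed B) (S : Set ℝ) (q : P) :
    IsClosed {x | ∀ t ∈ S, pr.φ t q x ∈ B} := by
  convert isClosed_biInter fun t (_ : t ∈ S) => hB.preimage (pr.continuous_φ_apply t q)
  ext
  simp

lemma thickening_Aset_subset_Dset {Pstar : Set P} {B : Set X} {T ε : ℝ}
    (hA : ∀ p ∈ Pstar, thickening ε (Ainv (procSkew pr p) (univ ×ˢ B)) ⊆
      Gset (procSkew pr p) T (univ ×ˢ B)) (q : P) :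
    thickening ε (Aset pr Pstar B q) ⊆ Dset pr Pstar T B q := by
  intro y hy
  obtain ⟨x, ⟨s, p, hp, hq, hsx⟩, hxy⟩ := mem_thickening_iff.1 hy
  refine ⟨s, p, hp, hq, hA p hp (mem_thickening_iff.2 ⟨(s, x), hsx, ?_⟩)⟩
  simpa [Prod.dist_eq] using hxy

end TwoSidedProcess

theorem stmt14_general {P X : Type*} [MetricSpace X]
    (pr : TwoSidedProcess P X)
    (π₀ : ℝ → X → X) (hπ₀ : IsFlow π₀) (B : Set X) (hBcpt : IsCompact B)
    (hne : (Ainv π₀ B).Nonempty)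
    (Pstar : Set P)
    (hrep : ∀ q : P, ∃ p ∈ Pstar, ∃ s : ℝ, pr.θ s p = q)
    (T δ ε : ℝ) (hT : 0 < T) (hδ : 0 < δ)
    (hΓ : ∀ p ∈ Pstar, GammaSet (procSkew pr p) T ((Set.univ : Set ℝ) ×ˢ B) = ∅)
    (h2 : Metric.thickening δ (Gset (prodFlow π₀) T ((Set.univ : Set ℝ) ×ˢ B)) ⊆
      (Set.univ : Set ℝ) ×ˢ B)
    (hclose : ∀ p ∈ Pstar, ∀ z ∈ (Set.univ : Set ℝ) ×ˢ closure (Metric.thickening δ B),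
      ∀ t ∈ Set.Icc (-T) T, dist (prodFlow π₀ t z) (procSkew pr p t z) < δ / 3)
    (hA : ∀ p ∈ Pstar,
      Metric.thickening ε (Ainv (procSkew pr p) ((Set.univ : Set ℝ) ×ˢ B)) ⊆
        Gset (procSkew pr p) T ((Set.univ : Set ℝ) ×ˢ B)) :
    (∀ q : P, IsClosed (Dset pr Pstar T B q)) ∧
    (∀ q : P, ∀ x ∈ Dset pr Pstar T B q, ∀ t : ℝ, 0 ≤ t →
      pr.φ t q x ∈ Dset pr Pstar T B (pr.θ t q)) ∧
    (∀ (q : P) (t : ℝ), 0 ≤ t →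
      pr.φ t q '' Aset pr Pstar B q = Aset pr Pstar B (pr.θ t q)) ∧
    (∀ q : P, (Aset pr Pstar B q).Nonempty ∧ IsCompact (Aset pr Pstar B q)) ∧
    ∀ q : P, Metric.thickening ε (Aset pr Pstar B q) ⊆ Dset pr Pstar T B q := by
  have hBc := hBcpt.isClosed
  have hstay : ∀ q x, (∀ t ∈ Icc (-T) T, pr.φ t q x ∈ B) → ∀ t, -T ≤ t → pr.φ t q x ∈ B :=
    fun _ _ hx _ ht => pr.φ_mem_of_forall_Icc_mem hBc hT
      (fun _ _ => pr.φ_notMem_frontier_of_GammaSet_eq_empty hrep hBc hT.le hΓ) hx ht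
  obtain ⟨x₀, hx₀⟩ := hne
  have hx₀D : ∀ q, ∀ t ∈ Icc (-T) T, pr.φ t q x₀ ∈ B := by
    intro q t ht
    obtain ⟨p, hp, s, rfl⟩ := hrep q
    have hx₀δ : x₀ ∈ closure (thickening δ B) :=
      subset_closure (self_subset_thickening hδ B hx₀.1.1)
    exact pr.φ_mem_of_dist_prodFlow_lt hπ₀ hBc h2 hx₀
      ((hclose p hp (s, x₀) ⟨trivial, hx₀δ⟩ t ht).trans (by linarith))
  refine ⟨?_, ?_, ?_, fun q => ⟨?_, ?_⟩, pr.thickening_Aset_subset_Dset hA⟩ <;>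
    simp only [TwoSidedProcess.Dset_eq hrep hBc, TwoSidedProcess.Aset_eq hrep]
  · exact pr.isClosed_setOf_forall_φ_mem hBc _
  · intro q x hx t _ u hu
    rw [← pr.φ_add]
    exact hstay q x hx _ (by linarith [hu.1])
  · exact fun q t _ => pr.image_setOf_forall_φ_mem B t q
  · exact pr.exists_forall_φ_mem hBcpt
      (fun q t ht => hstay q x₀ (hx₀D q) t (by linarith)) q
  · refine hBcpt.of_isClosed_subset ?_ fun x hx => by simpa [pr.φ_zero] using hx 0
    simpa using pr.isClosed_setOf_forall_φ_mem hBc univ q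

/-- Continuation of a local attractor for a general non-autonomous dynamical system:
`D` is closed-valued and forward invariant, `A` is invariant with nonempty compact
values, and `U_ε(A(q)) ⊆ D(q)`; i.e. `A` is a past attractor. -/
theorem stmt14 {P X : Type*} [MetricSpace X] [LocallyCompactSpace X]
    (pr : TwoSidedProcess P X)
    (π₀ : ℝ → X → X) (hπ₀ : IsFlow π₀) (B : Set X) (hBcpt : IsCompact B)
    (hB : IsStableIsolatingBlock π₀ B) (hne : (Ainv π₀ B).Nonempty)
    (Pstar : Set P)
    (hrep : ∀ q : P, ∃ p ∈ Pstar, ∃ s : ℝ, pr.θ s p = q)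
    (huniq : ∀ p ∈ Pstar, ∀ p' ∈ Pstar, (∃ s : ℝ, pr.θ s p = p') → p = p')
    (T δ ε : ℝ) (hT : 0 < T) (hδ : 0 < δ) (hε : 0 < ε)
    (hcpt : IsCompact (closure (Metric.thickening δ B)))
    (hΓ : ∀ p ∈ Pstar, GammaSet (procSkew pr p) T ((Set.univ : Set ℝ) ×ˢ B) = ∅)
    (hGne : ∀ p ∈ Pstar, (Gset (procSkew pr p) T ((Set.univ : Set ℝ) ×ˢ B)).Nonempty)
    (h1 : Metric.thickening δ (Gset (prodFlow π₀) (2 * T) ((Set.univ : Set ℝ) ×ˢ B)) ⊆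
      Gset (prodFlow π₀) T ((Set.univ : Set ℝ) ×ˢ B))
    (h2 : Metric.thickening δ (Gset (prodFlow π₀) T ((Set.univ : Set ℝ) ×ˢ B)) ⊆
      (Set.univ : Set ℝ) ×ˢ B)
    (h3 : Metric.thickening δ
        (Gset (prodFlow π₀) T (Metric.thickening δ ((Set.univ : Set ℝ) ×ˢ B))) ⊆
      (Set.univ : Set ℝ) ×ˢ B)
    (hclose : ∀ p ∈ Pstar, ∀ z ∈ (Set.univ : Set ℝ) ×ˢ closure (Metric.thickening δ B),
      ∀ t ∈ Set.Icc (-T) T, dist (prodFlow π₀ t z) (procSkew pr p t z) < δ / 3)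
    (hA : ∀ p ∈ Pstar,
      Metric.thickening ε (Ainv (procSkew pr p) ((Set.univ : Set ℝ) ×ˢ B)) ⊆
        Gset (procSkew pr p) T ((Set.univ : Set ℝ) ×ˢ B)) :
    (∀ q : P, IsClosed (Dset pr Pstar T B q)) ∧
    (∀ q : P, ∀ x ∈ Dset pr Pstar T B q, ∀ t : ℝ, 0 ≤ t →
      pr.φ t q x ∈ Dset pr Pstar T B (pr.θ t q)) ∧
    (∀ (q : P) (t : ℝ), 0 ≤ t →
      pr.φ t q '' Aset pr Pstar B q = Aset pr Pstar B (pr.θ t q)) ∧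
    (∀ q : P, (Aset pr Pstar B q).Nonempty ∧ IsCompact (Aset pr Pstar B q)) ∧
    ∀ q : P, Metric.thickening ε (Aset pr Pstar B q) ⊆ Dset pr Pstar T B q :=
  stmt14_general pr π₀ hπ₀ B hBcpt hne Pstar hrep T δ ε hT hδ hΓ h2 hclose hA
end

section
/- Let π₀ be a local semiflow on a metric space X, let B ⊆ X be closed and strongly π₀-admissible, let U ⊆ X be open with B ⊆ U, cl U strongly π₀-admissible, and d(B, X ∖ U) ≥ δ₀ for some δ₀ > 0. Let π_n be local semiflows on ℝ × X, none of which explodes in N := ℝ × B, and suppose π_n converges to π₀ uniformly, in the sense that for every t̄ > 0, sup{ d(P₂((s,x)π_n t), xπ₀t) : (s,x) ∈ ℝ × U, 0 < t ≤ t̄, t < min(ω^{π₀}_x, ω^{π_n}_{(s,x)}) } → 0 as n → ∞. Then N is strongly {π_n}-semi-singular-admissible. -/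
open Set Metric Filter Topology
open scoped NNReal ENNReal

/-- A local semiflow on a metric space `Z`: a map defined on an "open" domain
`D = {(t,z) : 0 ≤ t, t < ω z} ⊆ [0,∞) × Z` (openness within `[0,∞) × Z`),
continuous on `D`, with `zπ0 = z` and the local semigroup property. -/
structure LocalSemiflow (Z : Type*) [MetricSpace Z] where
  /-- The escape time of a point. -/
  ω : Z → ℝ≥0∞
  ω_pos : ∀ z, 0 < ω z
  /-- The semiflow map; only its values for `0 ≤ t` with `ENNReal.ofReal t < ω z`
  are relevant. -/
  toFun : ℝ → Z → Z
  /-- The domain is open in `[0,∞) × Z`. -/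
  isOpenDom : ∀ (t : ℝ) (z : Z), 0 ≤ t → ENNReal.ofReal t < ω z →
    ∃ ε > 0, ∀ (t' : ℝ) (z' : Z), |t' - t| < ε → dist z' z < ε → 0 ≤ t' →
      ENNReal.ofReal t' < ω z'
  contOn : ContinuousOn (fun p : ℝ × Z => toFun p.1 p.2)
    {p : ℝ × Z | 0 ≤ p.1 ∧ ENNReal.ofReal p.1 < ω p.2}
  map_zero : ∀ z, toFun 0 z = z
  map_add : ∀ (s t : ℝ) (z : Z), 0 ≤ s → ENNReal.ofReal s < ω z → 0 ≤ t →
    ENNReal.ofReal t < ω (toFun s z) →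
    ENNReal.ofReal (s + t) < ω z ∧ toFun (s + t) z = toFun t (toFun s z)

/-- `π` does not explode in `N`: if the whole forward orbit of `z` stays in `N`
then `ω z = ∞`. -/
def DoesNotExplodeIn {Z : Type*} [MetricSpace Z] (ρ : LocalSemiflow Z) (N : Set Z) : Prop :=
  ∀ z : Z, (∀ t : ℝ, 0 ≤ t → ENNReal.ofReal t < ρ.ω z → ρ.toFun t z ∈ N) → ρ.ω z = ⊤

/-- A closed set `N` is strongly `ρ`-admissible: `ρ` does not explode in `N` and
endpoint sequences of orbit segments `z_nρ[0,t_n] ⊆ N` with `t_n → ∞` have convergent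
subsequences. -/
def StronglyAdmissible {Z : Type*} [MetricSpace Z] (ρ : LocalSemiflow Z) (N : Set Z) : Prop :=
  DoesNotExplodeIn ρ N ∧
  ∀ (z : ℕ → Z) (t : ℕ → ℝ), (∀ n, 0 ≤ t n) →
    Filter.Tendsto t Filter.atTop Filter.atTop →
    (∀ n, ENNReal.ofReal (t n) < ρ.ω (z n)) →
    (∀ n, ∀ r : ℝ, 0 ≤ r → r ≤ t n → ρ.toFun r (z n) ∈ N) →
    ∃ φ : ℕ → ℕ, StrictMono φ ∧ ∃ l : Z,
      Filter.Tendsto (fun m => ρ.toFun (t (φ m)) (z (φ m))) Filter.atTop (nhds l)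

/-- `A⁺_ρ(Y)` for a local semiflow. -/
def AplusL {Z : Type*} [MetricSpace Z] (ρ : LocalSemiflow Z) (Y : Set Z) : Set Z :=
  {z ∈ Y | ∀ t : ℝ, 0 ≤ t → ENNReal.ofReal t < ρ.ω z → ρ.toFun t z ∈ Y}

/-- A full left solution of a local semiflow through `z`. -/
def IsFullLeftSolution {Z : Type*} [MetricSpace Z] (ρ : LocalSemiflow Z)
    (σ : ℝ → Z) (z : Z) : Prop :=
  σ 0 = z ∧ ∀ t s : ℝ, t ≤ 0 → 0 ≤ s → t + s ≤ 0 →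
    ENNReal.ofReal s < ρ.ω (σ t) ∧ ρ.toFun s (σ t) = σ (t + s)

/-- `A⁻_ρ(Y)` for a local semiflow: points admitting a full left solution in `Y`. -/
def AminusL {Z : Type*} [MetricSpace Z] (ρ : LocalSemiflow Z) (Y : Set Z) : Set Z :=
  {z ∈ Y | ∃ σ : ℝ → Z, IsFullLeftSolution ρ σ z ∧ ∀ t : ℝ, t ≤ 0 → σ t ∈ Y}

/-- `A_ρ(Y) = A⁺_ρ(Y) ∩ A⁻_ρ(Y)`. -/
def AinvL {Z : Type*} [MetricSpace Z] (ρ : LocalSemiflow Z) (Y : Set Z) : Set Z :=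
  AplusL ρ Y ∩ AminusL ρ Y

/-- `⟨N,L⟩` is an index pair in the closed isolating neighborhood `Ñ` w.r.t. `ρ`
(for `K = A_ρ(Ñ)`): `K ⊆ int(N ∖ L)`, `K` is the maximal invariant set in `cl(N ∖ L)`,
`L` is positively invariant relative to `N`, and `L` is an exit ramp for `N`. -/
def IsIndexPair {Z : Type*} [MetricSpace Z] (ρ : LocalSemiflow Z)
    (Ntil N L : Set Z) : Prop :=
  L ⊆ N ∧ N ⊆ Ntil ∧
  AinvL ρ Ntil ⊆ interior (N \ L) ∧
  (AinvL ρ Ntil ⊆ closure (N \ L) ∧ AinvL ρ Ntil = AinvL ρ (AinvL ρ Ntil) ∧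
    ∀ S ⊆ closure (N \ L), S = AinvL ρ S → S ⊆ AinvL ρ Ntil) ∧
  (∀ z ∈ L, ∀ ε : ℝ, 0 ≤ ε → ENNReal.ofReal ε < ρ.ω z →
    (∀ r : ℝ, 0 ≤ r → r ≤ ε → ρ.toFun r z ∈ N) →
    ∀ r : ℝ, 0 ≤ r → r ≤ ε → ρ.toFun r z ∈ L) ∧
  (∀ z ∈ N, ¬ (∀ t : ℝ, 0 ≤ t → ENNReal.ofReal t < ρ.ω z → ρ.toFun t z ∈ N) →
    ∃ t : ℝ, 0 ≤ t ∧ ENNReal.ofReal t < ρ.ω z ∧ ρ.toFun t z ∈ L)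

/-- Semi-singular convergence of local semiflows `π_n` on `ℝ × X` to a local
semiflow `π₀` on `X`. -/
def SemiSingConvLoc {X : Type*} [MetricSpace X]
    (πn : ℕ → LocalSemiflow (ℝ × X)) (π₀ : LocalSemiflow X) : Prop :=
  ∀ (s : ℕ → ℝ) (x : ℕ → X) (x₀ : X) (t : ℕ → ℝ) (t₀ : ℝ),
    Filter.Tendsto x Filter.atTop (nhds x₀) → (∀ n, 0 ≤ t n) →
    Filter.Tendsto t Filter.atTop (nhds t₀) →
    (∀ n, ENNReal.ofReal (t n) < (πn n).ω (s n, x n)) →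
    ENNReal.ofReal t₀ < π₀.ω x₀ ∧
      Filter.Tendsto (fun n => ((πn n).toFun (t n) (s n, x n)).2) Filter.atTop
        (nhds (π₀.toFun t₀ x₀))

/-- `N ⊆ ℝ × X` is `{π_n}`-semi-singular-admissible: projected endpoint sequences of
orbit segments `(s_n,x_n)π_n[0,t_n] ⊆ N` with `t_n → ∞` have convergent subsequences. -/
def SemiSingAdmissible {X : Type*} [MetricSpace X]
    (πn : ℕ → LocalSemiflow (ℝ × X)) (N : Set (ℝ × X)) : Prop :=
  ∀ (s : ℕ → ℝ) (x : ℕ → X) (t : ℕ → ℝ), (∀ n, 0 ≤ t n) →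
    Filter.Tendsto t Filter.atTop Filter.atTop →
    (∀ n, ENNReal.ofReal (t n) < (πn n).ω (s n, x n)) →
    (∀ n, ∀ r : ℝ, 0 ≤ r → r ≤ t n → (πn n).toFun r (s n, x n) ∈ N) →
    ∃ φ : ℕ → ℕ, StrictMono φ ∧ ∃ l : X,
      Filter.Tendsto (fun m => ((πn (φ m)).toFun (t (φ m)) (s (φ m), x (φ m))).2)
        Filter.atTop (nhds l)

/-- Strong `{π_n}`-semi-singular-admissibility. -/
def StronglySemiSingAdmissible {X : Type*} [MetricSpace X]
    (πn : ℕ → LocalSemiflow (ℝ × X)) (N : Set (ℝ × X)) : Prop :=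
  SemiSingAdmissible πn N ∧ ∀ n, DoesNotExplodeIn (πn n) N

/-- `N ⊆ ℝ × X` is strongly `π`-semi-admissible: `π` does not explode in `N` and endpoint
sequences of orbit segments `(s_n,x_n)π[0,t_n] ⊆ N` with `t_n → ∞` and `(s_n + t_n)`
precompact have convergent subsequences. -/
def StronglySemiAdmissible {X : Type*} [MetricSpace X]
    (π : LocalSemiflow (ℝ × X)) (N : Set (ℝ × X)) : Prop :=
  DoesNotExplodeIn π N ∧
  ∀ (s : ℕ → ℝ) (x : ℕ → X) (t : ℕ → ℝ), (∀ n, 0 ≤ t n) →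
    Filter.Tendsto t Filter.atTop Filter.atTop →
    Bornology.IsBounded (Set.range fun n => s n + t n) →
    (∀ n, ENNReal.ofReal (t n) < π.ω (s n, x n)) →
    (∀ n, ∀ r : ℝ, 0 ≤ r → r ≤ t n → π.toFun r (s n, x n) ∈ N) →
    ∃ φ : ℕ → ℕ, StrictMono φ ∧ ∃ l : ℝ × X,
      Filter.Tendsto (fun m => π.toFun (t (φ m)) (s (φ m), x (φ m)))
        Filter.atTop (nhds l)

/-- The product local semiflow on `ℝ × X` of a local semiflow on `X`:
`(s,x)πt = (s+t, xπ₀t)`. -/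
noncomputable def prodLocal {X : Type*} [MetricSpace X] (π₀ : LocalSemiflow X) :
    LocalSemiflow (ℝ × X) where
  ω := fun p => π₀.ω p.2
  ω_pos := fun p => π₀.ω_pos p.2
  toFun := fun t p => (p.1 + t, π₀.toFun t p.2)
  isOpenDom := by
    intro t z ht hlt
    obtain ⟨ε, hε, h⟩ := π₀.isOpenDom t z.2 ht hlt
    refine ⟨ε, hε, fun t' z' ht' hz' ht'0 => h t' z'.2 ht' ?_ ht'0⟩
    calc dist z'.2 z.2 ≤ dist z' z := by rw [Prod.dist_eq]; exact le_max_right _ _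
    _ < ε := hz'
  contOn := by
    apply ContinuousOn.prodMk
    · exact (continuous_snd.fst.add continuous_fst).continuousOn
    · exact π₀.contOn.comp (continuous_fst.prodMk continuous_snd.snd).continuousOn
        (fun p hp => ⟨hp.1, hp.2⟩)
  map_zero := fun z => by simp [π₀.map_zero]
  map_add := by
    intro s t z hs hws ht hwt
    obtain ⟨h1, h2⟩ := π₀.map_add s t z.2 hs hws ht hwt
    exact ⟨h1, by simp [h2, add_assoc]⟩

/-- A local semiflow on `ℝ × X` is a skew product if `P₁((s,x)πt) = s + t`
whenever defined. -/
def IsSkewLocal {X : Type*} [MetricSpace X] (π : LocalSemiflow (ℝ × X)) : Prop :=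
  ∀ (t s : ℝ) (x : X), 0 ≤ t → ENNReal.ofReal t < π.ω (s, x) →
    (π.toFun t (s, x)).1 = s + t

/-!
Fix an orbit segment of `π_n` inside `ℝ × B` of length `t_n → ∞`. For each `k`, pick `n` so
large that `π_n` is `min δ₀ (1/(k+1))`-close to `π₀` on time intervals of length `k + 1`, and
let `y_k` be the `X`-component of the point `k + 1` time units before the end of the segment.
Since the `π_n`-orbit of `y_k` stays in `B` and `d(B, X ∖ U) ≥ δ₀`, the `π₀`-orbit of `y_k`
cannot leave `U` before time `k + 1`, so by non-explosion in `cl U` it exists up to that time.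
Strong admissibility of `cl U` gives a convergent subsequence of `y_k π₀ (k+1)`, and the
endpoints of the `π_n`-segments are `1/(k+1)`-close to these.
-/

theorem Icc_subset_of_forall_Ico_subset {α : Type*} [ConditionallyCompleteLinearOrder α]
    [TopologicalSpace α] [OrderTopology α] [DenselyOrdered α] {a b : α} {s : Set α}
    (ha : a ∈ s) (hlim : ∀ c ∈ Ioc a b, Ico a c ⊆ s → c ∈ s)
    (hstep : ∀ t ∈ Ico a b, Icc a t ⊆ s → s ∈ 𝓝[>] t) : Icc a b ⊆ s := by
  rcases lt_or_ge b a with hba | hab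
  · simp [Icc_eq_empty_of_lt hba]
  set A := {t ∈ Icc a b | Icc a t ⊆ s}
  have haA : a ∈ A := ⟨left_mem_Icc.2 hab, by simp [ha]⟩
  have hbdd : BddAbove A := ⟨b, fun t ht => ht.1.2⟩
  set c := sSup A
  have hc : c ∈ Icc a b := ⟨le_csSup hbdd haA, csSup_le ⟨a, haA⟩ fun t ht => ht.1.2⟩
  have hcs : Icc a c ⊆ s := by
    have hIco : Ico a c ⊆ s := fun q hq => by
      obtain ⟨t, htA, hqt⟩ := exists_lt_of_lt_csSup ⟨a, haA⟩ hq.2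
      exact htA.2 ⟨hq.1, hqt.le⟩
    rw [← Ico_insert_right hc.1]
    refine insert_subset ?_ hIco
    rcases hc.1.eq_or_lt with hac | hac
    · exact hac ▸ ha
    · exact hlim c ⟨hac, hc.2⟩ hIco
  by_contra hsub
  have hcb : c < b := hc.2.lt_of_ne fun hcb => hsub (hcb ▸ hcs)
  obtain ⟨u, hcu, hus⟩ :=
    (mem_nhdsGT_iff_exists_Ioo_subset' hcb).1 (hstep c ⟨hc.1, hcb⟩ hcs)
  obtain ⟨t, hct, htu⟩ := exists_between (lt_min hcu hcb)
  have htA : t ∈ A := by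
    refine ⟨⟨hc.1.trans hct.le, htu.le.trans (min_le_right _ _)⟩, fun q hq => ?_⟩
    rcases le_or_gt q c with hqc | hqc
    · exact hcs ⟨hq.1, hqc⟩
    · exact hus ⟨hqc, hq.2.trans_lt (htu.trans_le (min_le_left _ _))⟩
  exact (le_csSup hbdd htA).not_gt hct

namespace LocalSemiflow

variable {Z : Type*} [MetricSpace Z] (π : LocalSemiflow Z)

theorem continuousOn_orbit (z : Z) :
    ContinuousOn (fun t => π.toFun t z) {t | 0 ≤ t ∧ ENNReal.ofReal t < π.ω z} :=
  π.contOn.comp (continuousOn_id.prodMk continuousOn_const) fun _ ht => ht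

variable {π}

theorem ofReal_lt_ω_of_le {z : Z} {t t' : ℝ} (h : ENNReal.ofReal t < π.ω z) (ht : t' ≤ t) :
    ENNReal.ofReal t' < π.ω z :=
  (ENNReal.ofReal_le_ofReal ht).trans_lt h

theorem toFun_add_eq_of_toFun_eq {w z : Z} {a r δ : ℝ} (ha : 0 ≤ a) (hr : 0 ≤ r) (hδ : 0 ≤ δ)
    (hrw : ENNReal.ofReal r < π.ω w) (hrz : ENNReal.ofReal (a + r) < π.ω z)
    (heq : π.toFun r w = π.toFun (a + r) z) (hδω : ENNReal.ofReal δ < π.ω (π.toFun r w)) :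
    ENNReal.ofReal (r + δ) < π.ω w ∧ π.toFun (r + δ) w = π.toFun (a + (r + δ)) z := by
  obtain ⟨hw, hw'⟩ := π.map_add r δ w hr hrw hδ hδω
  obtain ⟨-, hz'⟩ := π.map_add (a + r) δ z (by positivity) hrz hδ (heq ▸ hδω)
  exact ⟨hw, by rw [hw', heq, ← add_assoc, hz']⟩

theorem toFun_eq_of_eqOn_Ico {w z : Z} {a c : ℝ} (ha : 0 ≤ a) (hc : 0 < c)
    (hcw : ENNReal.ofReal c < π.ω w) (hcz : ENNReal.ofReal (a + c) < π.ω z)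
    (heq : EqOn (fun q => π.toFun q w) (fun q => π.toFun (a + q) z) (Ico 0 c)) :
    π.toFun c w = π.toFun (a + c) z := by
  refine heq.of_subset_closure ?_ ?_ Ico_subset_Icc_self (closure_Ico hc.ne).ge ⟨hc.le, le_rfl⟩
  · exact (π.continuousOn_orbit w).mono fun q hq => ⟨hq.1, ofReal_lt_ω_of_le hcw hq.2⟩
  · refine (π.continuousOn_orbit z).comp (continuousOn_const.add continuousOn_id) fun q hq => ?_
    exact ⟨by linarith [hq.1], ofReal_lt_ω_of_le hcz (by linarith [hq.2])⟩

end LocalSemiflow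

section DoesNotExplodeIn

open LocalSemiflow

variable {Z : Type*} [MetricSpace Z] {π : LocalSemiflow Z} {N : Set Z}

theorem DoesNotExplodeIn.anti {M : Set Z} (h : DoesNotExplodeIn π M) (hNM : N ⊆ M) :
    DoesNotExplodeIn π N :=
  fun z hz => h z fun t h0 ht => hNM (hz t h0 ht)

theorem DoesNotExplodeIn.ofReal_lt_ω (h : DoesNotExplodeIn π N) {z : Z} {c : ℝ}
    (hc : ∀ τ, 0 ≤ τ → τ < c → ENNReal.ofReal τ < π.ω z → π.toFun τ z ∈ N) :
    ENNReal.ofReal c < π.ω z := by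
  by_contra! hle
  have htop := h z fun τ h0 hτ => hc τ h0 (ENNReal.ofReal_lt_ofReal_iff'.1 (hτ.trans_le hle)).1 hτ
  exact ENNReal.ofReal_ne_top (top_le_iff.1 (htop ▸ hle))

/-- `map_add` only yields `zπa π r = zπ(a+r)` once `zπa π r` is known to be defined;
non-explosion along the orbit segment in `N` supplies this. -/
theorem DoesNotExplodeIn.toFun_toFun (h : DoesNotExplodeIn π N) {z : Z} {a b : ℝ} (ha : 0 ≤ a)
    (hab : ENNReal.ofReal (a + b) < π.ω z) (horb : ∀ r, 0 ≤ r → r ≤ a + b → π.toFun r z ∈ N)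
    {r : ℝ} (hr : r ∈ Icc 0 b) :
    ENNReal.ofReal r < π.ω (π.toFun a z) ∧ π.toFun r (π.toFun a z) = π.toFun (a + r) z := by
  set w := π.toFun a z
  have hz : ∀ q ∈ Icc 0 b, ENNReal.ofReal (a + q) < π.ω z :=
    fun q hq => ofReal_lt_ω_of_le hab (by linarith [hq.2])
  refine Icc_subset_of_forall_Ico_subset
    (s := {q | ENNReal.ofReal q < π.ω w ∧ π.toFun q w = π.toFun (a + q) z})
    ?_ (fun c hc hIco => ?_) (fun q hq hIcc => ?_) hr
  · exact ⟨by simpa using π.ω_pos w, by rw [π.map_zero, add_zero]⟩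
  · have hcw : ENNReal.ofReal c < π.ω w := h.ofReal_lt_ω fun τ h0 hτ _ =>
      (hIco ⟨h0, hτ⟩).2 ▸ horb _ (by linarith) (by linarith [hc.2])
    exact ⟨hcw, toFun_eq_of_eqOn_Ico ha hc.1 hcw (hz c (Ioc_subset_Icc_self hc))
      fun p hp => (hIco hp).2⟩
  · obtain ⟨hqw, heq⟩ := hIcc ⟨hq.1, le_rfl⟩
    obtain ⟨δ, -, hδ, hδω⟩ := ENNReal.lt_iff_exists_real_btwn.1 (π.ω_pos (π.toFun q w))
    refine mem_nhdsGT_iff_exists_Ioo_subset.2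
      ⟨q + δ, by simpa using ENNReal.ofReal_pos.1 hδ, fun p hp => ?_⟩
    have := toFun_add_eq_of_toFun_eq ha hq.1 (sub_nonneg.2 hp.1.le) hqw
      (hz q (Ico_subset_Icc_self hq)) heq (ofReal_lt_ω_of_le hδω (by linarith [hp.2]))
    rwa [add_sub_cancel] at this

end DoesNotExplodeIn

section Shadowing

open LocalSemiflow

variable {X : Type*} [MetricSpace X]

def ApproximatesOn (ρ : LocalSemiflow (ℝ × X)) (π₀ : LocalSemiflow X) (U : Set X) (T ε : ℝ) :
    Prop :=
  ∀ (p : ℝ × X) (t : ℝ), p.2 ∈ U → 0 < t → t ≤ T → ENNReal.ofReal t < π₀.ω p.2 →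
    ENNReal.ofReal t < ρ.ω p → dist (ρ.toFun t p).2 (π₀.toFun t p.2) < ε

variable {ρ : LocalSemiflow (ℝ × X)} {π₀ : LocalSemiflow X} {B U : Set X} {T ε δ₀ : ℝ}

theorem ApproximatesOn.mono (h : ApproximatesOn ρ π₀ U T ε) (hε : ε ≤ δ₀) :
    ApproximatesOn ρ π₀ U T δ₀ :=
  fun p t h₁ h₂ h₃ h₄ h₅ => (h p t h₁ h₂ h₃ h₄ h₅).trans_le hε

theorem ApproximatesOn.ofReal_lt_ω_and_orbit_mem (h : ApproximatesOn ρ π₀ U T δ₀) (hBU : B ⊆ U)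
    (hdist : ∀ x ∈ B, ∀ y ∈ Uᶜ, δ₀ ≤ dist x y) (hne : DoesNotExplodeIn π₀ U) {w : ℝ × X}
    (hw : ENNReal.ofReal T < ρ.ω w) (horb : ∀ r ∈ Icc 0 T, (ρ.toFun r w).2 ∈ B) :
    ENNReal.ofReal T < π₀.ω w.2 ∧ ∀ r ∈ Icc 0 T, π₀.toFun r w.2 ∈ U := by
  have hU : ∀ r ∈ Icc 0 T, ENNReal.ofReal r < π₀.ω w.2 → π₀.toFun r w.2 ∈ U := by
    rintro r ⟨hr0, hrT⟩ hr
    have hw2 : w.2 ∈ U := hBU (by simpa [ρ.map_zero] using horb 0 ⟨le_rfl, hr0.trans hrT⟩)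
    rcases hr0.eq_or_lt with rfl | hr0
    · rwa [π₀.map_zero]
    · by_contra hrU
      have := h w r hw2 hr0 hrT hr (ofReal_lt_ω_of_le hw hrT)
      linarith [hdist _ (horb r ⟨hr0.le, hrT⟩) _ hrU]
  have hT := hne.ofReal_lt_ω fun τ h0 hτ hτω => hU τ ⟨h0, hτ.le⟩ hτω
  exact ⟨hT, fun r hr => hU r hr (ofReal_lt_ω_of_le hT hr.2)⟩

theorem ApproximatesOn.exists_near_endpoint (h : ApproximatesOn ρ π₀ U T ε) (hε : ε ≤ δ₀)
    (hBU : B ⊆ U) (hdist : ∀ x ∈ B, ∀ y ∈ Uᶜ, δ₀ ≤ dist x y) (hne₀ : DoesNotExplodeIn π₀ U)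
    (hne : DoesNotExplodeIn ρ (univ ×ˢ B)) {p : ℝ × X} {t : ℝ} (hT : 0 < T) (hTt : T ≤ t)
    (ht : ENNReal.ofReal t < ρ.ω p) (horb : ∀ r, 0 ≤ r → r ≤ t → ρ.toFun r p ∈ univ ×ˢ B) :
    ∃ y : X, ENNReal.ofReal T < π₀.ω y ∧ (∀ r ∈ Icc 0 T, π₀.toFun r y ∈ U) ∧
      dist (ρ.toFun t p).2 (π₀.toFun T y) < ε := by
  have hshift := fun r (hr : r ∈ Icc 0 T) => hne.toFun_toFun (a := t - T) (by linarith)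
    (by rwa [sub_add_cancel]) (by rwa [sub_add_cancel]) hr
  set w := ρ.toFun (t - T) p
  obtain ⟨hωT, hU⟩ := (h.mono hε).ofReal_lt_ω_and_orbit_mem hBU hdist hne₀
    (hshift T ⟨hT.le, le_rfl⟩).1 fun r hr => by
      rw [(hshift r hr).2]
      exact (horb _ (by linarith [hr.1]) (by linarith [hr.2])).2
  refine ⟨w.2, hωT, hU, ?_⟩
  have hw2 : w.2 ∈ U := by simpa [π₀.map_zero] using hU 0 ⟨le_rfl, hT.le⟩
  obtain ⟨hTw, hend⟩ := hshift T ⟨hT.le, le_rfl⟩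
  have hd := h w T hw2 hT le_rfl hωT hTw
  rwa [hend, sub_add_cancel] at hd

end Shadowing

theorem stmt16_general {X : Type*} [MetricSpace X]
    (π₀ : LocalSemiflow X) (B : Set X)
    (U : Set X) (hBU : B ⊆ U)
    (hUadm : StronglyAdmissible π₀ (closure U))
    (δ₀ : ℝ) (hδ₀ : 0 < δ₀)
    (hdist : ∀ x ∈ B, ∀ y ∈ Uᶜ, δ₀ ≤ dist x y)
    (πn : ℕ → LocalSemiflow (ℝ × X))
    (hnoexp : ∀ n, DoesNotExplodeIn (πn n) ((Set.univ : Set ℝ) ×ˢ B))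
    (hunif : ∀ tbar > (0:ℝ), ∀ ε > (0:ℝ), ∃ n₀ : ℕ, ∀ n ≥ n₀,
      ∀ (s : ℝ) (x : X) (t : ℝ), x ∈ U → 0 < t → t ≤ tbar →
        ENNReal.ofReal t < π₀.ω x → ENNReal.ofReal t < (πn n).ω (s, x) →
        dist ((πn n).toFun t (s, x)).2 (π₀.toFun t x) < ε) :
    StronglySemiSingAdmissible πn ((Set.univ : Set ℝ) ×ˢ B) := by
  refine ⟨fun s x t _ httop hω horb => ?_, hnoexp⟩
  have hunif' (k : ℕ) : ∀ᶠ n in atTop,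
      ApproximatesOn (πn n) π₀ U ((k : ℝ) + 1) (min δ₀ (1 / ((k : ℝ) + 1))) :=
    eventually_atTop.2 <| (hunif _ (by positivity) _ (lt_min hδ₀ (by positivity))).imp
      fun _ h n hn p τ => h n hn p.1 p.2 τ
  obtain ⟨m, hm, hmk⟩ := extraction_forall_of_eventually fun k =>
    (tendsto_atTop.1 httop ((k : ℝ) + 1)).and (hunif' k)
  choose y hyω hyU hyd using fun k => (hmk k).2.exists_near_endpoint (min_le_left _ _) hBU
    hdist (hUadm.1.anti subset_closure) (hnoexp (m k)) (by positivity) (hmk k).1 (hω (m k))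
    (horb (m k))
  obtain ⟨ψ, hψ, l, hl⟩ := hUadm.2 y (fun k => (k : ℝ) + 1) (fun k => by positivity)
    (tendsto_atTop_add_const_right _ 1 tendsto_natCast_atTop_atTop) hyω
    fun k r h0 hr => subset_closure (hyU k r ⟨h0, hr⟩)
  refine ⟨m ∘ ψ, hm.comp hψ, l, hl.congr_dist ?_⟩
  refine squeeze_zero (fun _ => dist_nonneg)
    (fun j => (dist_comm _ _).trans_le ((hyd (ψ j)).le.trans (min_le_right _ _))) ?_
  exact tendsto_one_div_add_atTop_nhds_zero_nat.comp hψ.tendsto_atTop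

/-- If `B` is closed and strongly `π₀`-admissible, `B ⊆ U` with `cl U` strongly
`π₀`-admissible and `d(B, X ∖ U) ≥ δ₀ > 0`, the `π_n` do not explode in `N = ℝ × B`
and `π_n → π₀` uniformly, then `N` is strongly `{π_n}`-semi-singular-admissible. -/
theorem stmt16 {X : Type*} [MetricSpace X]
    (π₀ : LocalSemiflow X) (B : Set X) (hBclosed : IsClosed B)
    (hBadm : StronglyAdmissible π₀ B)
    (U : Set X) (hUopen : IsOpen U) (hBU : B ⊆ U)
    (hUadm : StronglyAdmissible π₀ (closure U))
    (δ₀ : ℝ) (hδ₀ : 0 < δ₀)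
    (hdist : ∀ x ∈ B, ∀ y ∈ Uᶜ, δ₀ ≤ dist x y)
    (πn : ℕ → LocalSemiflow (ℝ × X))
    (hnoexp : ∀ n, DoesNotExplodeIn (πn n) ((Set.univ : Set ℝ) ×ˢ B))
    (hunif : ∀ tbar > (0:ℝ), ∀ ε > (0:ℝ), ∃ n₀ : ℕ, ∀ n ≥ n₀,
      ∀ (s : ℝ) (x : X) (t : ℝ), x ∈ U → 0 < t → t ≤ tbar →
        ENNReal.ofReal t < π₀.ω x → ENNReal.ofReal t < (πn n).ω (s, x) →
        dist ((πn n).toFun t (s, x)).2 (π₀.toFun t x) < ε) :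
    StronglySemiSingAdmissible πn ((Set.univ : Set ℝ) ×ˢ B) :=
  stmt16_general π₀ B U hBU hUadm δ₀ hδ₀ hdist πn hnoexp hunif
end
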